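/- arXiv:math/0010247 — 8 statements merged into one kernel-verified Lean document; each statement's English description precedes it below -/
import Mathlib

section
/- Let F be a free group and Λ a normal subgroup such that the quotient F/Λ is a free group. Then F₂ ∩ Λ = [F, Λ], where F₂ = [F,F] is the commutator subgroup. -/
/-- Let `F` be a free group and `Λ` a normal subgroup such that the
quotient `F/Λ` is a free group.  Then `F₂ ∩ Λ = [F, Λ]`, where `F₂ = [F, F]` is the
commutator subgroup. -/
theorem stmt0 {α β : Type} (Λ : Subgroup (FreeGroup α)) [Λ.Normal]
    (hfree : Nonempty ((FreeGroup α ⧸ Λ) ≃* FreeGroup β)) :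
    commutator (FreeGroup α) ⊓ Λ = ⁅(⊤ : Subgroup (FreeGroup α)), Λ⁆ := by
  obtain ⟨e⟩ := hfree
  set F := FreeGroup α
  set K : Subgroup F := ⁅(⊤ : Subgroup F), Λ⁆ with hK
  -- the quotient map and a section coming from freeness of F ⧸ Λ
  let π : F →* F ⧸ Λ := QuotientGroup.mk' Λ
  have hπsurj : Function.Surjective π := QuotientGroup.mk'_surjective Λ
  choose sec hsec using fun b : β => hπsurj (e.symm (FreeGroup.of b))
  let s : FreeGroup β →* F := FreeGroup.lift sec
  have hπs : π.comp s = e.symm.toMonoidHom := by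
    apply FreeGroup.ext_hom
    intro b
    simpa [s, π] using hsec b
  let r : F →* F := s.comp (e.toMonoidHom.comp π)
  have hπr : ∀ f : F, π (r f) = π f := by
    intro f
    have := congrArg (fun h : FreeGroup β →* F ⧸ Λ => h (e (π f))) hπs
    simpa [r] using this
  have hr1 : ∀ x ∈ Λ, r x = 1 := by
    intro x hx
    have hπx : π x = 1 := (QuotientGroup.eq_one_iff x).mpr hx
    simp [r, hπx]
  have hrΛ : ∀ f : F, f⁻¹ * r f ∈ Λ := by
    intro f
    have : π (f⁻¹ * r f) = 1 := by
      rw [map_mul, map_inv, hπr f, inv_mul_cancel]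
    exact (QuotientGroup.eq_one_iff _).mp this
  -- conjugation is trivial mod K on elements of Λ
  have hconj : ∀ (g a : F), a ∈ Λ →
      (QuotientGroup.mk (g⁻¹ * a * g) : F ⧸ K) = QuotientGroup.mk a := by
    intro g a ha
    rw [QuotientGroup.eq]
    open scoped commutatorElement in
    have : (g⁻¹ * a * g)⁻¹ * a = ⁅g⁻¹, a⁻¹⁆ := by
      have key : ∀ (G : Type) [Group G] (x y : G), (x⁻¹ * y * x)⁻¹ * y = ⁅x⁻¹, y⁻¹⁆ := by
        intros; group
      exact key _ g a
    rw [this]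
    exact Subgroup.commutator_mem_commutator (Subgroup.mem_top _) (Λ.inv_mem ha)
  have hcentral : ∀ a ∈ Λ, ∀ q : F ⧸ K, Commute (QuotientGroup.mk a : F ⧸ K) q := by
    intro a ha q
    induction q using QuotientGroup.induction_on with
    | H g =>
      show _ * _ = _ * _
      rw [← QuotientGroup.mk_mul, ← QuotientGroup.mk_mul]
      rw [QuotientGroup.eq]
      open scoped commutatorElement in
      have : (a * g)⁻¹ * (g * a) = ⁅g⁻¹, a⁻¹⁆ := by
        have key : ∀ (G : Type) [Group G] (x y : G), (y * x)⁻¹ * (x * y) = ⁅x⁻¹, y⁻¹⁆ := by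
          intros; group
        exact key _ g a
      rw [this]
      exact Subgroup.commutator_mem_commutator (Subgroup.mem_top _) (Λ.inv_mem ha)
  -- the homomorphism  f ↦ (f⁻¹ * r f) mod K
  let τ : F →* F ⧸ K :=
    { toFun := fun f => QuotientGroup.mk (f⁻¹ * r f)
      map_one' := by simp
      map_mul' := by
        intro f g
        show (QuotientGroup.mk ((f * g)⁻¹ * r (f * g)) : F ⧸ K) = _
        have h1 : (f * g)⁻¹ * r (f * g) = (g⁻¹ * (f⁻¹ * r f) * g) * (g⁻¹ * r g) := by
          have key : ∀ (G : Type) [Group G] (x y u v : G),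
              (x * y)⁻¹ * (u * v) = (y⁻¹ * (x⁻¹ * u) * y) * (y⁻¹ * v) := by
            intros; group
          rw [map_mul]; exact key _ f g (r f) (r g)
        rw [h1, QuotientGroup.mk_mul, hconj g _ (hrΛ f)] }
  have hτcomm : commutator F ≤ τ.ker := by
    rw [commutator_def, Subgroup.commutator_le]
    intro p _ q _
    have hcom : Commute (τ p) (τ q) := hcentral _ (hrΛ p) (τ q)
    open scoped commutatorElement in
    have : τ ⁅p, q⁆ = ⁅τ p, τ q⁆ := map_commutatorElement τ p q
    rw [MonoidHom.mem_ker, this, commutatorElement_eq_one_iff_commute]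
    exact hcom
  apply le_antisymm
  · rintro x ⟨hx2, hxΛ⟩
    have h1 : τ x = 1 := hτcomm hx2
    have h2 : (QuotientGroup.mk (x⁻¹ * r x) : F ⧸ K) = 1 := h1
    rw [hr1 x hxΛ, mul_one] at h2
    have hx' : x⁻¹ ∈ K := (QuotientGroup.eq_one_iff _).mp h2
    exact K.inv_mem_iff.mp hx'
  · refine le_inf ?_ (Subgroup.commutator_le_right ⊤ Λ)
    rw [commutator_def]
    exact Subgroup.commutator_mono le_rfl le_top
end

section
/- Let G be a finite connected unitrivalent graph with first Betti number at least 1 (i.e., G contains a cycle) whose leaf edges are all oriented outward. Then there exists an orientation of all edges of G, agreeing with the given leaf orientations, such that no trivalent vertex is a source. -/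
open SimpleGraph

section Aux

variable {V : Type} {G : SimpleGraph V}

/-- In a closed non-nil walk, every support vertex is the head (`snd`) of some dart. -/
lemma exists_dart_snd {u : V} (p : G.Walk u u) (hp : ¬ p.Nil) {w : V}
    (hw : w ∈ p.support) : ∃ d ∈ p.darts, d.snd = w := by
  by_cases hwt : w ∈ p.support.tail
  · rw [← SimpleGraph.Walk.map_snd_darts] at hwt
    obtain ⟨d, hd, hds⟩ := List.mem_map.mp hwt
    exact ⟨d, hd, hds⟩
  · have hwu : w = u := by
      rw [p.support_eq_cons] at hw
      rcases List.mem_cons.mp hw with h | h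
      · exact h
      · exact absurd h hwt
    have hne : p.darts ≠ [] := by
      intro h
      apply hp
      have : p.length = 0 := by
        have := SimpleGraph.Walk.length_darts p
        rw [h] at this
        simpa using this.symm
      exact SimpleGraph.Walk.nil_iff_length_eq.mpr this
    refine ⟨p.darts.getLast hne, List.getLast_mem hne, ?_⟩
    rw [SimpleGraph.Walk.getLast_darts_eq_lastDart hne, hwu]; rfl

/-- In a closed non-nil walk, every support vertex is the tail (`fst`) of some dart. -/
lemma exists_dart_fst {u : V} (p : G.Walk u u) (hp : ¬ p.Nil) {w : V}
    (hw : w ∈ p.support) : ∃ d ∈ p.darts, d.fst = w := by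
  have hp' : ¬ p.reverse.Nil := by
    rw [SimpleGraph.Walk.nil_iff_length_eq, SimpleGraph.Walk.length_reverse]
    rw [SimpleGraph.Walk.nil_iff_length_eq] at hp
    exact hp
  have hw' : w ∈ p.reverse.support := by
    rw [SimpleGraph.Walk.support_reverse]; simpa using hw
  obtain ⟨d, hd, hds⟩ := exists_dart_snd p.reverse hp' hw'
  refine ⟨d.symm, SimpleGraph.Walk.mem_darts_reverse.mp hd, ?_⟩
  simpa using hds

lemma dart_snd_mem_edge (d : G.Dart) : d.snd ∈ d.edge := by
  obtain ⟨⟨a, b⟩, hab⟩ := d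
  simp [SimpleGraph.Dart.edge]

lemma mem_dart_edge {d : G.Dart} {a : V} (h : a ∈ d.edge) : a = d.fst ∨ a = d.snd := by
  obtain ⟨⟨x, y⟩, hxy⟩ := d
  simpa [SimpleGraph.Dart.edge, Sym2.mem_iff] using h

end Aux

/-- Let `G` be a finite connected unitrivalent graph with first Betti
number at least 1 (i.e. `G` contains a cycle, equivalently `G` is not acyclic) whose
leaf edges are all to be oriented outward.  Then there exists an orientation of all
edges of `G`, with every leaf edge oriented outward (toward its degree-1 endpoint),
such that no trivalent vertex is a source.

An orientation assigns to each edge the endpoint it points toward (its head). -/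
theorem stmt3 {V : Type} [Fintype V] [DecidableEq V] (G : SimpleGraph V)
    [DecidableRel G.Adj]
    (hconn : G.Connected)
    (hdeg : ∀ v : V, G.degree v = 1 ∨ G.degree v = 3)
    (hcycle : ¬ G.IsAcyclic) :
    ∃ o : G.edgeSet → V,
      (∀ e : G.edgeSet, o e ∈ e.1) ∧
      -- every leaf edge is oriented outward, toward its degree-1 endpoint:
      (∀ e : G.edgeSet, (∃ v ∈ e.1, G.degree v = 1) → G.degree (o e) = 1) ∧
      -- no trivalent vertex is a source:
      (∀ v : V, G.degree v = 3 → ∃ e : G.edgeSet, v ∈ e.1 ∧ o e = v) := by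
  classical
  -- extract a cycle
  unfold SimpleGraph.IsAcyclic at hcycle
  push_neg at hcycle
  obtain ⟨v0, c, hc⟩ := hcycle
  -- leaves have a unique neighbor
  have huniq : ∀ w : V, G.degree w = 1 → ∀ x y, G.Adj w x → G.Adj w y → x = y := by
    intro w hw x y hx hy
    exact Finset.card_le_one.mp hw.le x (by simpa using hx) y (by simpa using hy)
  -- no leaf lies on the cycle
  have hnoleaf : ∀ w ∈ c.support, G.degree w ≠ 1 := by
    intro w hw hw1
    obtain ⟨d1, hd1, hd1s⟩ := exists_dart_snd c hc.not_nil hw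
    obtain ⟨d2, hd2, hd2f⟩ := exists_dart_fst c hc.not_nil hw
    have hx : d1.fst = d2.snd := by
      apply huniq w hw1
      · rw [← hd1s]; exact d1.adj.symm
      · rw [← hd2f]; exact d2.adj
    have hedge : d1.edge = d2.edge := by
      have : d1.edge = s(d1.fst, w) := by rw [← hd1s]; rfl
      have h2 : d2.edge = s(w, d2.snd) := by rw [← hd2f]; rfl
      rw [this, h2, hx, Sym2.eq_swap]
    have hinj := List.inj_on_of_nodup_map (f := SimpleGraph.Dart.edge) (l := c.darts)
      (by exact hc.edges_nodup)
    have hd12 : d1 = d2 := hinj hd1 hd2 hedge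
    have hadj := d2.adj
    rw [hd2f, ← hd12, hd1s] at hadj
    exact G.irrefl hadj
  -- distance to the cycle
  have hS : (c.support.toFinset : Finset V).Nonempty :=
    ⟨v0, by simp [c.start_mem_support]⟩
  set dC : V → ℕ := fun v => ((c.support.toFinset).image (G.dist v)).min' (hS.image _) with hdC
  have dmem : ∀ v : V, ∃ w ∈ c.support, dC v = G.dist v w := by
    intro v
    have := Finset.min'_mem ((c.support.toFinset).image (G.dist v)) (hS.image _)
    obtain ⟨w, hw, hweq⟩ := Finset.mem_image.mp this
    exact ⟨w, by simpa using hw, hweq.symm⟩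
  have dle : ∀ v w, w ∈ c.support → dC v ≤ G.dist v w := by
    intro v w hw
    exact Finset.min'_le _ _ (Finset.mem_image_of_mem _ (by simpa using hw))
  -- a vertex off the cycle has a neighbor strictly closer to the cycle
  have hstep : ∀ v : V, v ∉ c.support → ∃ u, G.Adj v u ∧ dC u < dC v := by
    intro v hv
    obtain ⟨w, hw, hdvw⟩ := dmem v
    have hvw : v ≠ w := fun h => hv (h ▸ hw)
    have hdne : G.dist v w ≠ 0 :=
      SimpleGraph.dist_ne_zero_iff_ne_and_reachable.mpr ⟨hvw, hconn.preconnected v w⟩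
    obtain ⟨p, hp⟩ := SimpleGraph.exists_walk_of_dist_ne_zero hdne
    cases p with
    | nil => exact absurd rfl hvw
    | @cons _ u _ h q =>
      refine ⟨u, h, ?_⟩
      have h1 : dC u ≤ G.dist u w := dle u w hw
      have h2 : G.dist u w ≤ q.length := SimpleGraph.dist_le q
      have h3 : q.length + 1 = G.dist v w := by simpa using hp
      omega
  -- a leaf is strictly farther from the cycle than its unique neighbor
  have hleafstep : ∀ v u : V, G.Adj v u → G.degree u = 1 → dC v < dC u := by
    intro v u hadj hu1
    have hu : u ∉ c.support := fun h => hnoleaf u h hu1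
    obtain ⟨w, hw, hduw⟩ := dmem u
    have huw : u ≠ w := fun h => hu (h ▸ hw)
    have hdne : G.dist u w ≠ 0 :=
      SimpleGraph.dist_ne_zero_iff_ne_and_reachable.mpr ⟨huw, hconn.preconnected u w⟩
    obtain ⟨p, hp⟩ := SimpleGraph.exists_walk_of_dist_ne_zero hdne
    cases p with
    | nil => exact absurd rfl huw
    | @cons _ x _ h q =>
      have hxv : x = v := huniq u hu1 x v h hadj.symm
      have h1 : dC v ≤ G.dist v w := dle v w hw
      have h2 : G.dist v w ≤ q.length := by
        subst hxv; exact SimpleGraph.dist_le q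
      have h3 : q.length + 1 = G.dist u w := by simpa using hp
      omega
  -- every Sym2 has an endpoint of maximal dC
  have maxend : ∀ s : Sym2 V, ∃ w ∈ s, ∀ x ∈ s, dC x ≤ dC w := by
    intro s
    induction s using Sym2.inductionOn with
    | hf a b =>
      rcases le_total (dC a) (dC b) with h | h
      · exact ⟨b, by simp, fun x hx => by
          rcases Sym2.mem_iff.mp hx with rfl | rfl
          · exact h
          · exact le_rfl⟩
      · exact ⟨a, by simp, fun x hx => by
          rcases Sym2.mem_iff.mp hx with rfl | rfl
          · exact le_rfl
          · exact h⟩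
  -- the orientation
  refine ⟨fun e =>
    if h1 : ∃ w ∈ e.1, G.degree w = 1 then h1.choose
    else if h2 : ∃ d ∈ c.darts, d.edge = e.1 then h2.choose.snd
    else (maxend e.1).choose, ?_, ?_, ?_⟩
  · -- membership
    intro e
    beta_reduce
    split_ifs with h1 h2
    · exact h1.choose_spec.1
    · have hmem := dart_snd_mem_edge h2.choose
      rwa [h2.choose_spec.2] at hmem
    · exact (maxend e.1).choose_spec.1
  · -- leaf edges
    intro e he
    beta_reduce
    rw [dif_pos he]
    exact he.choose_spec.2
  · -- no trivalent source
    intro v hv3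
    by_cases hvc : v ∈ c.support
    · -- v on the cycle
      obtain ⟨d, hd, hds⟩ := exists_dart_snd c hc.not_nil hvc
      refine ⟨⟨d.edge, d.edge_mem⟩, ?_, ?_⟩
      · rw [← hds]; exact dart_snd_mem_edge _
      · have h1 : ¬ ∃ w ∈ (d.edge : Sym2 V), G.degree w = 1 := by
          rintro ⟨w, hwmem, hw1⟩
          rcases mem_dart_edge hwmem with rfl | rfl
          · exact hnoleaf _ (SimpleGraph.Walk.dart_fst_mem_support_of_mem_darts c hd) hw1
          · exact hnoleaf _ (SimpleGraph.Walk.dart_snd_mem_support_of_mem_darts c hd) hw1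
        have h2 : ∃ d' ∈ c.darts, d'.edge = (d.edge : Sym2 V) := ⟨d, hd, rfl⟩
        beta_reduce
        split_ifs with h1'
        · exact absurd h1' h1
        · have hinj := List.inj_on_of_nodup_map (f := SimpleGraph.Dart.edge) (l := c.darts)
            (by exact hc.edges_nodup)
          have hcd : h2.choose = d := hinj h2.choose_spec.1 hd h2.choose_spec.2
          rw [hcd, hds]
    · -- v off the cycle
      obtain ⟨u, hadj, hdu⟩ := hstep v hvc
      refine ⟨⟨s(v, u), hadj⟩, by simp, ?_⟩
      have h1 : ¬ ∃ w ∈ (s(v, u) : Sym2 V), G.degree w = 1 := by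
        rintro ⟨w, hwmem, hw1⟩
        rcases Sym2.mem_iff.mp hwmem with rfl | rfl
        · rw [hv3] at hw1; omega
        · exact absurd hdu (not_lt.mpr (hleafstep v w hadj hw1).le)
      have h2 : ¬ ∃ d ∈ c.darts, d.edge = (s(v, u) : Sym2 V) := by
        rintro ⟨d, hd, hde⟩
        have hvmem : v ∈ d.edge := by rw [hde]; simp
        rcases mem_dart_edge hvmem with h | h
        · exact hvc (h ▸ SimpleGraph.Walk.dart_fst_mem_support_of_mem_darts c hd)
        · exact hvc (h ▸ SimpleGraph.Walk.dart_snd_mem_support_of_mem_darts c hd)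
      beta_reduce
      split_ifs with h1'
      · exact absurd h1' h1
      · have hspec := (maxend (s(v, u) : Sym2 V)).choose_spec
        rcases Sym2.mem_iff.mp hspec.1 with h | h
        · exact h
        · exfalso
          have := hspec.2 v (by simp)
          rw [h] at this
          omega
end

section
/- A finite connected unitrivalent graph G with at least one trivalent vertex admits an edge orientation with all leaf edges oriented outward and no trivalent vertex a source if and only if G is not a tree. -/
set_option linter.unusedSectionVars false
set_option linter.unusedVariables false

open SimpleGraph

section Aux

variable {V : Type} [Fintype V] [DecidableEq V] {G : SimpleGraph V}


/-- unique neighbor of a degree-1 vertex -/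
lemma nbhd_eq [DecidableRel G.Adj] {a b : V} (hab : G.Adj a b) (ha : G.degree a = 1) :
    G.neighborFinset a = {b} := by
  obtain ⟨c, hc⟩ := Finset.card_eq_one.mp ha
  have hb : b ∈ G.neighborFinset a := (G.mem_neighborFinset a b).2 hab
  rw [hc] at hb ⊢
  simp_all

/-- no edge with both endpoints of degree 1 -/
lemma noK2 [DecidableRel G.Adj] (hconn : G.Connected) (htri : ∃ v : V, G.degree v = 3)
    {a b : V} (hab : G.Adj a b) (ha : G.degree a = 1) : G.degree b ≠ 1 := by
  intro hb
  have hA := nbhd_eq hab ha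
  have hB := nbhd_eq hab.symm hb
  have key : ∀ {x y : V} (_ : G.Walk x y), x = a ∨ x = b → y = a ∨ y = b := by
    intro x y q
    induction q with
    | nil => exact id
    | cons h q ih =>
      rename_i xx zz yy
      intro hx
      apply ih
      rcases hx with rfl | rfl
      · have : zz ∈ G.neighborFinset xx := (G.mem_neighborFinset xx zz).2 h
        rw [hA] at this
        right; simpa using this
      · have : zz ∈ G.neighborFinset xx := (G.mem_neighborFinset xx zz).2 h
        rw [hB] at this
        left; simpa using this
  obtain ⟨c, hc⟩ := htri
  obtain ⟨q⟩ := hconn.preconnected a c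
  rcases key q (Or.inl rfl) with rfl | rfl <;> omega

/-- a vertex on a cycle does not have degree 1 -/
lemma cycle_deg [DecidableRel G.Adj] {v : V} {p : G.Walk v v} (hp : p.IsCycle) {a : V}
    (ha : a ∈ p.support) : G.degree a ≠ 1 := by
  intro h1
  have hq : (p.rotate a ha).IsCycle := hp.rotate ha
  obtain ⟨x, hx, t, ht⟩ := (SimpleGraph.Walk.not_nil_iff).mp hq.not_nil
  rw [ht] at hq
  have hcons := (SimpleGraph.Walk.cons_isCycle_iff _ _).mp hq
  -- t is not nil
  have hlen : 3 ≤ (SimpleGraph.Walk.cons hx t).length := hq.three_le_length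
  have htnn : ¬ t.Nil := by
    rw [SimpleGraph.Walk.nil_iff_length_eq]
    simp [SimpleGraph.Walk.length_cons] at hlen ⊢
    intro h0
    rw [SimpleGraph.Walk.nil_iff_length_eq] at h0
    omega
  have htrn : ¬ t.reverse.Nil := by
    rw [SimpleGraph.Walk.nil_iff_length_eq, SimpleGraph.Walk.length_reverse]
    rw [SimpleGraph.Walk.nil_iff_length_eq] at htnn
    exact htnn
  obtain ⟨y, hy, t', ht'⟩ := (SimpleGraph.Walk.not_nil_iff).mp htrn
  have hmem : s(a, y) ∈ t.edges := by
    have : s(a, y) ∈ t.reverse.edges := by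
      rw [ht']; simp
    rwa [SimpleGraph.Walk.edges_reverse, List.mem_reverse] at this
  have hxy : y ≠ x := by
    rintro rfl
    exact hcons.2 hmem
  have hA := nbhd_eq hx h1
  have hA' := nbhd_eq hy h1
  rw [hA] at hA'
  exact hxy (Finset.singleton_injective hA'.symm)


end Aux

/-- A finite connected unitrivalent graph `G` with at least one
trivalent vertex admits an edge orientation with all leaf edges oriented outward and no
trivalent vertex a source if and only if `G` is not a tree (equivalently, since `G` is
connected, iff `G` is not acyclic).

An orientation assigns to each edge the endpoint it points toward (its head); a leaf
edge is oriented outward when its head has degree 1. -/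
theorem stmt4 {V : Type} [Fintype V] [DecidableEq V] (G : SimpleGraph V)
    [DecidableRel G.Adj]
    (hconn : G.Connected)
    (hdeg : ∀ v : V, G.degree v = 1 ∨ G.degree v = 3)
    (htri : ∃ v : V, G.degree v = 3) :
    (∃ o : G.edgeSet → V,
      (∀ e : G.edgeSet, o e ∈ e.1) ∧
      (∀ e : G.edgeSet, (∃ v ∈ e.1, G.degree v = 1) → G.degree (o e) = 1) ∧
      (∀ v : V, G.degree v = 3 → ∃ e : G.edgeSet, v ∈ e.1 ∧ o e = v))
    ↔ ¬ G.IsAcyclic := by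
  constructor
  · rintro ⟨o, ho1, ho2, ho3⟩
    intro hacyc
    have hsurj : Function.Surjective o := by
      intro v
      rcases hdeg v with h1 | h3
      · have hpos : 0 < (G.neighborFinset v).card := by
          have : (G.neighborFinset v).card = 1 := h1
          omega
        obtain ⟨b, hb⟩ := Finset.card_pos.mp hpos
        have hab : G.Adj v b := (G.mem_neighborFinset v b).1 hb
        refine ⟨⟨s(v, b), hab⟩, ?_⟩
        have hd1 : G.degree (o ⟨s(v, b), hab⟩) = 1 := ho2 _ ⟨v, by simp, h1⟩
        have := ho1 ⟨s(v, b), hab⟩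
        simp only [Sym2.mem_iff] at this
        rcases this with h | h
        · exact h
        · exact absurd hd1 (by rw [h]; exact noK2 hconn htri hab h1)
      · obtain ⟨e, _, he⟩ := ho3 v h3
        exact ⟨e, he⟩
    have hcard : Fintype.card V ≤ Fintype.card G.edgeSet := Fintype.card_le_of_surjective o hsurj
    have htree : G.IsTree := ⟨hconn, hacyc⟩
    have hE : G.edgeFinset.card + 1 = Fintype.card V := htree.card_edgeFinset
    have : Fintype.card G.edgeSet = G.edgeFinset.card := (Set.toFinset_card _).symm
    omega
  · intro hnac
    have nbhd_eq' : ∀ {a b : V}, G.Adj a b → G.degree a = 1 → G.neighborFinset a = {b} :=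
      fun hab ha => nbhd_eq hab ha
    have cycle_deg' : ∀ {v : V} {p : G.Walk v v}, p.IsCycle → ∀ {a : V}, a ∈ p.support →
        G.degree a ≠ 1 := fun hp => fun {a} ha => cycle_deg hp ha
    classical
    have dartsnd : ∀ d : G.Dart, d.snd ∈ d.edge := by
      rintro ⟨⟨x, y⟩, hxy⟩
      simp [SimpleGraph.Dart.edge]
    -- extract a cycle
    have hcyc : ∃ (v : V) (p : G.Walk v v), p.IsCycle := by
      unfold SimpleGraph.IsAcyclic at hnac
      push_neg at hnac
      obtain ⟨v, p, hp⟩ := hnac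
      exact ⟨v, p, hp⟩
    obtain ⟨v, p, hp⟩ := hcyc
    set S : Finset V := p.support.toFinset with hSdef
    have hS : S.Nonempty := ⟨v, by simp [hSdef]⟩
    set n := Fintype.card V with hn
    set D : V → ℕ := fun w => (S.image (G.dist w)).min' (hS.image _) with hD
    set rk : V → ℕ := fun w => ((Fintype.equivFin V) w : ℕ) with hrk
    set key : V → ℕ := fun w => D w * n + rk w with hkey
    have hrklt : ∀ w, rk w < n := fun w => ((Fintype.equivFin V) w).is_lt
    have key_lt : ∀ a b, D a < D b → key a < key b := by
      intro a b h
      have h1 : key a < (D a + 1) * n := by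
        simp only [hkey, add_mul, one_mul]
        exact Nat.add_lt_add_left (hrklt a) _
      have h2 : (D a + 1) * n ≤ D b * n := Nat.mul_le_mul_right _ h
      have h3 : D b * n ≤ key b := Nat.le_add_right _ _
      omega
    have key_inj : ∀ a b, key a = key b → a = b := by
      intro a b h
      have hd : D a = D b := by
        by_contra hne
        rcases Nat.lt_or_ge (D a) (D b) with hlt | hge
        · exact absurd h (Nat.ne_of_lt (key_lt a b hlt))
        · have : D b < D a := lt_of_le_of_ne hge (fun e => hne e.symm)
          exact absurd h.symm (Nat.ne_of_lt (key_lt b a this))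
      have : rk a = rk b := by
        simp only [hkey, hd] at h
        omega
      have := Fin.val_injective this
      exact (Fintype.equivFin V).injective this
    -- the tie-broken max function
    set f : V → V → V := fun a b => if key a ≤ key b then b else a with hf
    have hfsymm : ∀ a b, f a b = f b a := by
      intro a b
      simp only [hf]
      split_ifs with h1 h2 h2
      · exact (key_inj a b (le_antisymm h1 h2)).symm
      · rfl
      · rfl
      · exact key_inj a b (le_antisymm (le_of_not_ge h2) (le_of_not_ge h1))
    set F : Sym2 V → V := Sym2.lift ⟨f, hfsymm⟩ with hF
    have hFmem : ∀ s : Sym2 V, F s ∈ s := by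
      intro s
      induction s using Sym2.ind with
      | _ a b =>
        simp only [hF, Sym2.lift_mk, hf]
        split_ifs <;> simp
    have hFright : ∀ a b : V, key b < key a → F s(a, b) = a := by
      intro a b h
      simp only [hF, Sym2.lift_mk, hf, if_neg (not_le.mpr h)]
    -- darts for cycle edges
    have exdart : ∀ e ∈ p.edges, ∃ d ∈ p.darts, d.edge = e := by
      intro e he
      simpa [SimpleGraph.Walk.edges, List.mem_map] using he
    set o : G.edgeSet → V := fun e =>
      if h : e.1 ∈ p.edges then (Classical.choose (exdart e.1 h)).snd else F e.1 with ho
    -- D facts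
    have Dle : ∀ w u, u ∈ p.support → D w ≤ G.dist w u := by
      intro w u hu
      exact Finset.min'_le _ _ (Finset.mem_image_of_mem _ (List.mem_toFinset.mpr hu))
    have Dstep : ∀ w, w ∉ p.support → ∃ x, G.Adj w x ∧ D x < D w := by
      intro w hw
      obtain ⟨m, hm, hmin⟩ := Finset.mem_image.mp (Finset.min'_mem (S.image (G.dist w)) (hS.image _))
      have hmS : m ∈ p.support := List.mem_toFinset.mp hm
      have hdne : G.dist w m ≠ 0 := by
        rw [SimpleGraph.dist_ne_zero_iff_ne_and_reachable]
        exact ⟨fun h => hw (h ▸ hmS), hconn.preconnected w m⟩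
      obtain ⟨q, hq⟩ := SimpleGraph.exists_walk_of_dist_ne_zero hdne
      have hqnn : ¬ q.Nil := by
        rw [SimpleGraph.Walk.nil_iff_length_eq, hq]
        exact hdne
      obtain ⟨x, hx, t, ht⟩ := SimpleGraph.Walk.not_nil_iff.mp hqnn
      refine ⟨x, hx, ?_⟩
      have hDw : D w = G.dist w m := hmin.symm ▸ rfl
      have htl : t.length = G.dist w m - 1 := by
        have : q.length = t.length + 1 := by rw [ht]; simp
        omega
      have hxm : G.dist x m ≤ G.dist w m - 1 := htl ▸ SimpleGraph.dist_le t
      have hDx : D x ≤ G.dist x m := Dle x m hmS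
      omega
    -- the leaf-edge claim
    have claim : ∀ (a b : V) (h : G.Adj a b), G.degree a = 1 →
        G.degree (o ⟨s(a, b), h⟩) = 1 := by
      intro a b h h1
      have hnotsup : a ∉ p.support := fun hs => cycle_deg' hp hs h1
      have hne : s(a, b) ∉ p.edges := fun hmem =>
        hnotsup (SimpleGraph.Walk.fst_mem_support_of_mem_edges p hmem)
      obtain ⟨x, hx, hDx⟩ := Dstep a hnotsup
      have hxb : x = b := by
        have : x ∈ G.neighborFinset a := (G.mem_neighborFinset a x).2 hx
        rw [nbhd_eq' h h1] at this
        simpa using this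
      have hDb : D b < D a := hxb ▸ hDx
      have : o ⟨s(a, b), h⟩ = F s(a, b) := by simp only [ho, dif_neg hne]
      rw [this, hFright a b (key_lt b a hDb)]
      exact h1
    refine ⟨o, ?_, ?_, ?_⟩
    · -- head is an endpoint
      intro e
      by_cases h : e.1 ∈ p.edges
      · obtain ⟨hd, hedge⟩ := Classical.choose_spec (exdart e.1 h)
        simp only [ho, dif_pos h]
        have h2 := dartsnd (Classical.choose (exdart e.1 h))
        rwa [hedge] at h2
      · simp only [ho, dif_neg h]
        exact hFmem e.1
    · -- leaf edges outward
      rintro ⟨e1, he⟩ ⟨w, hw, hw1⟩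
      induction e1 using Sym2.ind with
      | _ a b =>
        have hab : G.Adj a b := he
        rcases Sym2.mem_iff.mp hw with rfl | rfl
        · exact claim w b hab hw1
        · have hswap : (⟨s(a, w), he⟩ : G.edgeSet) = ⟨s(w, a), hab.symm⟩ :=
            Subtype.ext (Sym2.eq_swap)
          rw [hswap]
          exact claim w a hab.symm hw1
    · -- no trivalent source
      intro v0 h3
      by_cases hsup : v0 ∈ p.support
      · -- v0 is snd of some dart
        have htail : v0 ∈ p.support.tail := by
          rcases List.mem_cons.mp (p.support_eq_cons ▸ hsup) with rfl | h
          · -- v0 = v : last element of tail is v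
            have hne : p.support.tail ≠ [] := by
              have h3l : 3 ≤ p.length := hp.three_le_length
              have : p.support.length = p.length + 1 := SimpleGraph.Walk.length_support p
              intro hnil
              have : p.support.length ≤ 1 := by
                rw [p.support_eq_cons, hnil]
                simp
              omega
            have := List.getLast_mem hne
            rwa [List.getLast_tail, p.getLast_support] at this
          · exact h
        rw [← SimpleGraph.Walk.map_snd_darts] at htail
        obtain ⟨d, hd, hdsnd⟩ := List.mem_map.mp htail
        have hedge : d.edge ∈ p.edges := List.mem_map_of_mem hd
        refine ⟨⟨d.edge, d.edge_mem⟩, ?_, ?_⟩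
        · have h2 := dartsnd d
          rwa [hdsnd] at h2
        · simp only [ho, dif_pos hedge]
          obtain ⟨hd', hedge'⟩ := Classical.choose_spec (exdart d.edge hedge)
          have hnodup : (p.darts.map SimpleGraph.Dart.edge).Nodup := hp.edges_nodup
          have := List.inj_on_of_nodup_map hnodup hd' hd hedge'
          rw [this, hdsnd]
      · obtain ⟨x, hx, hDx⟩ := Dstep v0 hsup
        have hne : s(v0, x) ∉ p.edges := fun hmem =>
          hsup (SimpleGraph.Walk.fst_mem_support_of_mem_edges p hmem)
        refine ⟨⟨s(v0, x), hx⟩, by simp, ?_⟩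
        simp only [ho, dif_neg hne]
        exact hFright v0 x (key_lt x v0 hDx)
end

section
/- Let F' be the free group on y₁,…,y_g and for q ≥ 1 let A₁(F'/F'_q) be the set of g-tuples λ = (λ₁,…,λ_g) with λᵢ ∈ F'/F'_q such that the map yᵢ ↦ λᵢ⁻¹yᵢλᵢ defines an automorphism φ_λ of F'/F'_{q+1} with φ_λ(y₁⋯y_g) = y₁⋯y_g. Then A₁(F'/F'_q) is a group under the multiplication (λμ)ᵢ = λᵢ·φ_λ(μᵢ), and λ ↦ φ_λ is a group homomorphism to Aut(F'/F'_{q+1}). -/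
/-! **Statement 9.** Let `F'` be the free group on `y₁,…,y_g` and for `q ≥ 1` let
`A₁(F'/F'_q)` be the set of `g`-tuples `λ = (λ₁,…,λ_g)` with `λᵢ ∈ F'/F'_q` such that
`yᵢ ↦ λᵢ⁻¹yᵢλᵢ` defines an automorphism `φ_λ` of `F'/F'_{q+1}` with
`φ_λ(y₁⋯y_g) = y₁⋯y_g`.  Then `A₁(F'/F'_q)` is a group under the multiplication
`(λμ)ᵢ = λᵢ·φ_λ(μᵢ)`, and `λ ↦ φ_λ` is a group homomorphism to `Aut(F'/F'_{q+1})`.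

In Mathlib's indexing `F'_q = lowerCentralSeries F' (q-1)`.  Tuples in the quotient are
handled via set-theoretic lifts to `F'` (the conditions are independent of the lifts
since `[F'_q, F'] ⊆ F'_{q+1}`).  The group structure is stated by exhibiting the
multiplication, unit and inverse together with the group axioms; `φ_{λμ} = φ_λ ∘ φ_μ`
is expressed via `MulEquiv.trans`. -/

abbrev FP (g : ℕ) := FreeGroup (Fin g)

/-- `y₁⋯y_g ∈ F'`. -/
def yProd (g : ℕ) : FP g := ((List.finRange g).map FreeGroup.of).prod

/-- `F'/F'_q`. -/
abbrev Qt (g q : ℕ) := FP g ⧸ (⊤ : Subgroup (FP g)).lowerCentralSeries (q - 1)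

/-- `F'/F'_{q+1}`. -/
abbrev Qt1 (g q : ℕ) := FP g ⧸ (⊤ : Subgroup (FP g)).lowerCentralSeries q

/-- The condition defining `A₁(F'/F'_q)` on a tuple `lam` of elements of `F'/F'_q`:
some (equivalently, any) lift `l` of `lam` to `F'` induces by conjugation an
automorphism of `F'/F'_{q+1}` fixing `y₁⋯y_g`. -/
def A1Cond (g q : ℕ) (lam : Fin g → Qt g q) : Prop :=
  ∃ (l : Fin g → FP g) (φ : MulAut (Qt1 g q)),
    (∀ i, (QuotientGroup.mk (l i) : Qt g q) = lam i) ∧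
    (∀ i, φ (QuotientGroup.mk (FreeGroup.of i)) =
        QuotientGroup.mk ((l i)⁻¹ * FreeGroup.of i * l i)) ∧
    φ (QuotientGroup.mk (yProd g)) = QuotientGroup.mk (yProd g)

namespace Stmt9Aux

variable {g q : ℕ}

def proj (g q : ℕ) : Qt1 g q →* Qt g q :=
  QuotientGroup.map _ _ (MonoidHom.id (FP g)) (Subgroup.lowerCentralSeries_antitone (S := (⊤ : Subgroup (FP g))) (Nat.sub_le q 1))

@[simp] lemma proj_mk (x : FP g) : proj g q (QuotientGroup.mk x) = QuotientGroup.mk x := rfl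

open scoped commutatorElement in
/-- images of `F'_q` are central in `F'/F'_{q+1}`. -/
lemma mk1_commute (hq : 1 ≤ q) {z : FP g} (hz : z ∈ (⊤ : Subgroup (FP g)).lowerCentralSeries (q - 1))
    (y : Qt1 g q) : (QuotientGroup.mk z : Qt1 g q) * y = y * QuotientGroup.mk z := by
  obtain ⟨n, rfl⟩ := Nat.exists_eq_add_of_le hq
  induction y using QuotientGroup.induction_on with
  | H x =>
    rw [← QuotientGroup.mk_mul, ← QuotientGroup.mk_mul, QuotientGroup.eq]
    have hz' : z⁻¹ ∈ (⊤ : Subgroup (FP g)).lowerCentralSeries n := by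
      exact ((⊤ : Subgroup (FP g)).lowerCentralSeries n).inv_mem (by simpa using hz)
    have hmem : ⁅z⁻¹, x⁻¹⁆ ∈ (⊤ : Subgroup (FP g)).lowerCentralSeries (n + 1) :=
      Subgroup.commutator_mem_commutator hz' (Subgroup.mem_top _)
    have he : (z * x)⁻¹ * (x * z) = ⁅z⁻¹, x⁻¹⁆⁻¹ := by
      simp only [commutatorElement_def]; group
    rw [he, Nat.add_comm 1 n]
    exact ((⊤ : Subgroup (FP g)).lowerCentralSeries (n + 1)).inv_mem hmem

lemma conj_congr (hq : 1 ≤ q) {x x' : FP g}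
    (h : (QuotientGroup.mk x : Qt g q) = QuotientGroup.mk x') (y : Qt1 g q) :
    (QuotientGroup.mk x : Qt1 g q)⁻¹ * y * QuotientGroup.mk x
      = (QuotientGroup.mk x' : Qt1 g q)⁻¹ * y * QuotientGroup.mk x' := by
  have hz : x⁻¹ * x' ∈ (⊤ : Subgroup (FP g)).lowerCentralSeries (q - 1) := QuotientGroup.eq.mp h
  have hmk : (QuotientGroup.mk x' : Qt1 g q) =
      QuotientGroup.mk x * QuotientGroup.mk (x⁻¹ * x') := by
    rw [← QuotientGroup.mk_mul]; group
  have hc := mk1_commute hq hz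
  rw [hmk, mul_inv_rev]
  calc (QuotientGroup.mk x : Qt1 g q)⁻¹ * y * QuotientGroup.mk x
      = (QuotientGroup.mk (x⁻¹ * x') : Qt1 g q)⁻¹ * (QuotientGroup.mk (x⁻¹ * x') *
          ((QuotientGroup.mk x : Qt1 g q)⁻¹ * y * QuotientGroup.mk x)) := by group
    _ = (QuotientGroup.mk (x⁻¹ * x') : Qt1 g q)⁻¹ *
          (((QuotientGroup.mk x : Qt1 g q)⁻¹ * y * QuotientGroup.mk x) *
            QuotientGroup.mk (x⁻¹ * x')) := by rw [hc _]
    _ = (QuotientGroup.mk (x⁻¹ * x') : Qt1 g q)⁻¹ * (QuotientGroup.mk x : Qt1 g q)⁻¹ * y *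
          (QuotientGroup.mk x * QuotientGroup.mk (x⁻¹ * x')) := by group

/-- automorphisms of `F'/F'_{q+1}` are determined by the images of the generators. -/
lemma aut_ext (φ ψ : MulAut (Qt1 g q))
    (h : ∀ i, φ (QuotientGroup.mk (FreeGroup.of i)) = ψ (QuotientGroup.mk (FreeGroup.of i))) :
    φ = ψ := by
  have key : φ.toMonoidHom.comp (QuotientGroup.mk' ((⊤ : Subgroup (FP g)).lowerCentralSeries q)) =
      ψ.toMonoidHom.comp (QuotientGroup.mk' ((⊤ : Subgroup (FP g)).lowerCentralSeries q)) :=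
    FreeGroup.ext_hom _ _ h
  ext x
  induction x using QuotientGroup.induction_on with
  | H w => exact DFunLike.congr_fun key w

lemma lcs_quot_le (n : ℕ) :
    (⊤ : Subgroup (Qt1 g q)).lowerCentralSeries n ≤
      Subgroup.map (QuotientGroup.mk' ((⊤ : Subgroup (FP g)).lowerCentralSeries q))
        ((⊤ : Subgroup (FP g)).lowerCentralSeries n) := by
  induction n with
  | zero =>
      intro x _
      obtain ⟨w, rfl⟩ := QuotientGroup.mk_surjective x
      exact ⟨w, Subgroup.mem_top w, rfl⟩
  | succ n ih =>
      show ⁅(⊤ : Subgroup (Qt1 g q)).lowerCentralSeries n, (⊤ : Subgroup (Qt1 g q))⁆ ≤ _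
      have htop : (⊤ : Subgroup (Qt1 g q)) ≤
          Subgroup.map (QuotientGroup.mk' ((⊤ : Subgroup (FP g)).lowerCentralSeries q)) ⊤ := by
        intro x _
        obtain ⟨w, rfl⟩ := QuotientGroup.mk_surjective x
        exact ⟨w, Subgroup.mem_top w, rfl⟩
      exact Subgroup.commutator_le_map_commutator ih htop

lemma proj_phi_lcs (φ : MulAut (Qt1 g q)) {z : FP g}
    (hz : z ∈ (⊤ : Subgroup (FP g)).lowerCentralSeries (q - 1)) :
    proj g q (φ (QuotientGroup.mk z)) = 1 := by
  have h1 : φ (QuotientGroup.mk z) ∈ (⊤ : Subgroup (Qt1 g q)).lowerCentralSeries (q - 1) := by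
    refine ((Subgroup.map_lowerCentralSeries ⊤
      (φ.toMonoidHom.comp (QuotientGroup.mk' ((⊤ : Subgroup (FP g)).lowerCentralSeries q))) (q - 1)).le.trans
      (Subgroup.lowerCentralSeries_mono (q - 1) le_top)) ?_
    exact ⟨z, hz, rfl⟩
  obtain ⟨w, hw, hwe⟩ := lcs_quot_le (q - 1) h1
  rw [← hwe]
  show proj g q (QuotientGroup.mk w) = 1
  rw [proj_mk, QuotientGroup.eq_one_iff]
  exact hw

lemma proj_phi_congr (φ : MulAut (Qt1 g q)) {x x' : Qt1 g q}
    (h : proj g q x = proj g q x') :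
    proj g q (φ x) = proj g q (φ x') := by
  obtain ⟨a, rfl⟩ := QuotientGroup.mk_surjective x
  obtain ⟨a', rfl⟩ := QuotientGroup.mk_surjective x'
  have hz : a⁻¹ * a' ∈ (⊤ : Subgroup (FP g)).lowerCentralSeries (q - 1) := by
    rw [proj_mk, proj_mk] at h
    exact QuotientGroup.eq.mp h
  have : (QuotientGroup.mk a' : Qt1 g q) =
      QuotientGroup.mk a * QuotientGroup.mk (a⁻¹ * a') := by
    rw [← QuotientGroup.mk_mul]; group
  rw [this, map_mul, map_mul, proj_phi_lcs φ hz, mul_one]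

end Stmt9Aux

namespace Stmt9Aux

variable {g q : ℕ}

/-- chosen lift of an element of `A₁`. -/
noncomputable def lft (a : {lam : Fin g → Qt g q // A1Cond g q lam}) : Fin g → FP g :=
  a.2.choose

/-- chosen automorphism `φ_λ`. -/
noncomputable def Phi0 (a : {lam : Fin g → Qt g q // A1Cond g q lam}) : MulAut (Qt1 g q) :=
  a.2.choose_spec.choose

lemma lft_spec (a : {lam : Fin g → Qt g q // A1Cond g q lam}) (i : Fin g) :
    (QuotientGroup.mk (lft a i) : Qt g q) = a.1 i :=
  a.2.choose_spec.choose_spec.1 i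

lemma Phi0_of (a : {lam : Fin g → Qt g q // A1Cond g q lam}) (i : Fin g) :
    Phi0 a (QuotientGroup.mk (FreeGroup.of i)) =
      QuotientGroup.mk ((lft a i)⁻¹ * FreeGroup.of i * lft a i) :=
  a.2.choose_spec.choose_spec.2.1 i

lemma Phi0_y (a : {lam : Fin g → Qt g q // A1Cond g q lam}) :
    Phi0 a (QuotientGroup.mk (yProd g)) = QuotientGroup.mk (yProd g) :=
  a.2.choose_spec.choose_spec.2.2

lemma mk_conj (l w : FP g) :
    (QuotientGroup.mk (l⁻¹ * w * l) : Qt1 g q) =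
      (QuotientGroup.mk l : Qt1 g q)⁻¹ * QuotientGroup.mk w * QuotientGroup.mk l := by
  rw [← QuotientGroup.mk_inv, ← QuotientGroup.mk_mul, ← QuotientGroup.mk_mul]

lemma Phi0_of' (hq : 1 ≤ q) (a : {lam : Fin g → Qt g q // A1Cond g q lam})
    (la : Fin g → FP g) (hla : ∀ i, (QuotientGroup.mk (la i) : Qt g q) = a.1 i) (i : Fin g) :
    Phi0 a (QuotientGroup.mk (FreeGroup.of i)) =
      QuotientGroup.mk ((la i)⁻¹ * FreeGroup.of i * la i) := by
  rw [Phi0_of, mk_conj, mk_conj]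
  exact conj_congr hq ((lft_spec a i).trans (hla i).symm) _

lemma Phi0_unique (hq : 1 ≤ q) (a : {lam : Fin g → Qt g q // A1Cond g q lam})
    (φ : MulAut (Qt1 g q)) (la : Fin g → FP g)
    (hla : ∀ i, (QuotientGroup.mk (la i) : Qt g q) = a.1 i)
    (hφ : ∀ i, φ (QuotientGroup.mk (FreeGroup.of i)) =
      QuotientGroup.mk ((la i)⁻¹ * FreeGroup.of i * la i)) :
    φ = Phi0 a :=
  aut_ext _ _ fun i => (hφ i).trans (Phi0_of' hq a la hla i).symm

/-- the product tuple. -/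
noncomputable def mulFun (a b : {lam : Fin g → Qt g q // A1Cond g q lam}) (i : Fin g) :
    Qt g q :=
  a.1 i * proj g q (Phi0 a (QuotientGroup.mk (lft b i)))

lemma mul_aux (a b : {lam : Fin g → Qt g q // A1Cond g q lam}) :
    ∃ l : Fin g → FP g,
      (∀ i, (QuotientGroup.mk (l i) : Qt g q) = mulFun a b i) ∧
      (∀ i, ((Phi0 b).trans (Phi0 a)) (QuotientGroup.mk (FreeGroup.of i)) =
        QuotientGroup.mk ((l i)⁻¹ * FreeGroup.of i * l i)) := by
  have hr : ∀ i, ∃ r : FP g,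
      (QuotientGroup.mk r : Qt1 g q) = Phi0 a (QuotientGroup.mk (lft b i)) := fun i =>
    QuotientGroup.mk_surjective _
  choose r hrr using hr
  refine ⟨fun i => lft a i * r i, fun i => ?_, fun i => ?_⟩
  · rw [QuotientGroup.mk_mul, lft_spec a i, mulFun, ← hrr i, proj_mk]
  · show Phi0 a (Phi0 b (QuotientGroup.mk (FreeGroup.of i))) = _
    rw [Phi0_of b i, mk_conj, map_mul, map_mul, map_inv, Phi0_of a i, ← hrr i]
    simp only [mul_inv_rev, QuotientGroup.mk_mul, QuotientGroup.mk_inv]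
    group

lemma mul_cond (a b : {lam : Fin g → Qt g q // A1Cond g q lam}) :
    A1Cond g q (mulFun a b) := by
  obtain ⟨l, h1, h2⟩ := mul_aux a b
  exact ⟨l, (Phi0 b).trans (Phi0 a), h1, h2, by
    show Phi0 a (Phi0 b _) = _
    rw [Phi0_y b, Phi0_y a]⟩

/-- the multiplication. -/
noncomputable def mulE (a b : {lam : Fin g → Qt g q // A1Cond g q lam}) :
    {lam : Fin g → Qt g q // A1Cond g q lam} :=
  ⟨mulFun a b, mul_cond a b⟩

lemma Phi0_mul (hq : 1 ≤ q) (a b : {lam : Fin g → Qt g q // A1Cond g q lam}) :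
    Phi0 (mulE a b) = (Phi0 b).trans (Phi0 a) := by
  obtain ⟨l, h1, h2⟩ := mul_aux a b
  exact (Phi0_unique hq (mulE a b) _ l h1 h2).symm

/-- the identity element. -/
noncomputable def oneE : {lam : Fin g → Qt g q // A1Cond g q lam} :=
  ⟨fun _ => 1, fun _ => 1, MulEquiv.refl _, fun _ => by simp, fun i => by simp, rfl⟩

lemma Phi0_one (hq : 1 ≤ q) :
    Phi0 (oneE : {lam : Fin g → Qt g q // A1Cond g q lam}) = MulEquiv.refl _ :=
  (Phi0_unique hq oneE _ (fun _ => 1) (fun _ => by simp [oneE]) (fun i => by simp)).symm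

end Stmt9Aux

namespace Stmt9Aux

variable {g q : ℕ}

/-- the inverse tuple. -/
noncomputable def invFun' (a : {lam : Fin g → Qt g q // A1Cond g q lam}) (i : Fin g) :
    Qt g q :=
  proj g q ((Phi0 a).symm ((QuotientGroup.mk (lft a i) : Qt1 g q)⁻¹))

lemma inv_aux (a : {lam : Fin g → Qt g q // A1Cond g q lam}) :
    ∃ m : Fin g → FP g,
      (∀ i, (QuotientGroup.mk (m i) : Qt g q) = invFun' a i) ∧
      (∀ i, (Phi0 a).symm (QuotientGroup.mk (FreeGroup.of i)) =
        QuotientGroup.mk ((m i)⁻¹ * FreeGroup.of i * m i)) := by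
  have hr : ∀ i, ∃ r : FP g,
      (QuotientGroup.mk r : Qt1 g q) =
        (Phi0 a).symm ((QuotientGroup.mk (lft a i) : Qt1 g q)⁻¹) := fun i =>
    QuotientGroup.mk_surjective _
  choose m hm using hr
  refine ⟨m, fun i => ?_, fun i => ?_⟩
  · rw [invFun', ← hm i, proj_mk]
  · apply (Phi0 a).injective
    rw [MulEquiv.apply_symm_apply, mk_conj, map_mul, map_mul, map_inv, hm i,
      MulEquiv.apply_symm_apply, Phi0_of a i, mk_conj]
    group

lemma inv_cond (a : {lam : Fin g → Qt g q // A1Cond g q lam}) :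
    A1Cond g q (invFun' a) := by
  obtain ⟨m, h1, h2⟩ := inv_aux a
  exact ⟨m, (Phi0 a).symm, h1, h2, (MulEquiv.symm_apply_eq _).mpr (Phi0_y a).symm⟩

/-- the inversion. -/
noncomputable def invE (a : {lam : Fin g → Qt g q // A1Cond g q lam}) :
    {lam : Fin g → Qt g q // A1Cond g q lam} :=
  ⟨invFun' a, inv_cond a⟩

lemma Phi0_inv (hq : 1 ≤ q) (a : {lam : Fin g → Qt g q // A1Cond g q lam}) :
    Phi0 (invE a) = (Phi0 a).symm := by
  obtain ⟨m, h1, h2⟩ := inv_aux a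
  exact (Phi0_unique hq (invE a) _ m h1 h2).symm

end Stmt9Aux

open Stmt9Aux in
theorem stmt9 (g q : ℕ) (hq : 1 ≤ q) :
    ∃ (mul : {lam : Fin g → Qt g q // A1Cond g q lam} →
             {lam : Fin g → Qt g q // A1Cond g q lam} →
             {lam : Fin g → Qt g q // A1Cond g q lam})
      (one : {lam : Fin g → Qt g q // A1Cond g q lam})
      (inv : {lam : Fin g → Qt g q // A1Cond g q lam} →
             {lam : Fin g → Qt g q // A1Cond g q lam}),
      -- group axioms:
      (∀ a b c, mul (mul a b) c = mul a (mul b c)) ∧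
      (∀ a, mul one a = a) ∧
      (∀ a, mul a one = a) ∧
      (∀ a, mul (inv a) a = one) ∧
      -- the multiplication is `(λμ)ᵢ = λᵢ·φ_λ(μᵢ)` (computed via lifts):
      (∀ a b, ∀ (la lb : Fin g → FP g) (φ : MulAut (Qt1 g q)),
        (∀ i, (QuotientGroup.mk (la i) : Qt g q) = a.1 i) →
        (∀ i, (QuotientGroup.mk (lb i) : Qt g q) = b.1 i) →
        (∀ i, φ (QuotientGroup.mk (FreeGroup.of i)) =
            QuotientGroup.mk ((la i)⁻¹ * FreeGroup.of i * la i)) →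
        ∀ i, (mul a b).1 i =
          a.1 i * QuotientGroup.map _ _ (MonoidHom.id (FP g))
              (Subgroup.lowerCentralSeries_antitone (S := (⊤ : Subgroup (FP g))) (by omega))
            (φ (QuotientGroup.mk (lb i)))) ∧
      -- `λ ↦ φ_λ` is a homomorphism to `Aut(F'/F'_{q+1})`:
      ∃ Φ : {lam : Fin g → Qt g q // A1Cond g q lam} → MulAut (Qt1 g q),
        (∀ a, ∀ la : Fin g → FP g,
          (∀ i, (QuotientGroup.mk (la i) : Qt g q) = a.1 i) →
          (∀ i, Φ a (QuotientGroup.mk (FreeGroup.of i)) =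
              QuotientGroup.mk ((la i)⁻¹ * FreeGroup.of i * la i))) ∧
        (∀ a b, Φ (mul a b) = (Φ b).trans (Φ a)) := by
  refine ⟨mulE, oneE, invE, fun a b c => ?_, fun a => ?_, fun a => ?_, fun a => ?_, ?_,
    Phi0, fun a la hla i => Phi0_of' hq a la hla i, fun a b => Phi0_mul hq a b⟩
  · -- associativity
    apply Subtype.ext; funext i
    show mulFun (mulE a b) c i = mulFun a (mulE b c) i
    have h : proj g q (QuotientGroup.mk (lft (mulE b c) i)) =
        proj g q (QuotientGroup.mk (lft b i) * Phi0 b (QuotientGroup.mk (lft c i))) := by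
      rw [proj_mk, lft_spec, map_mul, proj_mk]
      show mulFun b c i = _
      rw [mulFun, lft_spec]
    have h2 := proj_phi_congr (Phi0 a) h
    rw [map_mul (Phi0 a), map_mul] at h2
    show (mulE a b).1 i * proj g q (Phi0 (mulE a b) (QuotientGroup.mk (lft c i))) =
      a.1 i * proj g q (Phi0 a (QuotientGroup.mk (lft (mulE b c) i)))
    rw [Phi0_mul hq a b, h2]
    show mulFun a b i * _ = _
    rw [mulFun, MulEquiv.trans_apply, mul_assoc]
  · -- one_mul
    apply Subtype.ext; funext i
    show mulFun oneE a i = a.1 i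
    rw [mulFun, Phi0_one hq]
    simp [oneE, lft_spec]
  · -- mul_one
    apply Subtype.ext; funext i
    show mulFun a oneE i = a.1 i
    have h : proj g q (QuotientGroup.mk
        (lft (oneE : {lam : Fin g → Qt g q // A1Cond g q lam}) i)) =
        proj g q (QuotientGroup.mk (1 : FP g)) := by
      rw [proj_mk, proj_mk, lft_spec]; simp [oneE]
    rw [mulFun, proj_phi_congr (Phi0 a) h]
    simp
  · -- inv_mul
    apply Subtype.ext; funext i
    show mulFun (invE a) a i = oneE.1 i
    rw [mulFun, Phi0_inv hq a]
    show invFun' a i * _ = _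
    rw [invFun', map_inv, map_inv]
    simp [oneE]
  · -- multiplication formula
    intro a b la lb φ h1 h2 h3 i
    have hφ : φ = Phi0 a := Phi0_unique hq a φ la h1 h3
    rw [hφ]
    show mulFun a b i = a.1 i * proj g q (Phi0 a (QuotientGroup.mk (lb i)))
    rw [mulFun]
    congr 1
    refine proj_phi_congr (Phi0 a) ?_
    rw [proj_mk, proj_mk, lft_spec, h2 i]
end

section
/- The kernel of the homomorphism A₁(F') → Aut₁(F'), λ ↦ φ_λ, is isomorphic to ℤ^g, generated by the tuples with λᵢ = yᵢ^{nᵢ}. -/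
open FreeGroup
namespace Stmt10Aux

variable {α : Type*} [DecidableEq α]


lemma reduce_tail {h : α × Bool} {t : List (α × Bool)}
    (H : FreeGroup.reduce (h :: t) = h :: t) : FreeGroup.reduce t = t := by
  rw [reduce.cons] at H
  rcases hr : FreeGroup.reduce t with _ | ⟨hd, tl⟩
  · rw [hr] at H
    obtain ⟨-, h2⟩ := List.cons_eq_cons.mp H
    exact h2
  · rw [hr] at H
    by_cases hc : h.1 = hd.1 ∧ h.2 = !hd.2
    · simp only [hc, and_self, if_true] at H
      have h1 : (FreeGroup.reduce t).length ≤ t.length := (reduce.red (L := t)).length_le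
      rw [hr] at h1
      have h2 := congrArg List.length H
      simp only [List.length_cons] at h1 h2
      omega
    · simp only [hc, if_false] at H
      obtain ⟨-, h2⟩ := List.cons_eq_cons.mp H
      exact h2

lemma cons_eq_append {c : α × Bool} :
    ∀ {l : List (α × Bool)}, c :: l = l ++ [c] → l = List.replicate l.length c := by
  intro l
  induction l with
  | nil => intro _; rfl
  | cons d t ih =>
    intro H
    rw [List.cons_append] at H
    injection H with h1 h2
    subst h1
    rw [List.length_cons, List.replicate_succ, ← ih h2]

lemma step {a : α} {b : Bool} {t : List (α × Bool)} {x : FreeGroup α}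
    (hx : x.toWord = (a, b) :: t) :
    x = FreeGroup.mk [(a, b)] * FreeGroup.mk t ∧ (FreeGroup.mk t).toWord = t := by
  have hred : FreeGroup.reduce ((a, b) :: t) = (a, b) :: t := by
    rw [← hx]; exact reduce_toWord x
  have ht : (FreeGroup.mk t).toWord = t := by
    rw [toWord_mk]; exact reduce_tail hred
  refine ⟨?_, ht⟩
  rw [mul_mk, ← List.singleton_append]
  conv_lhs => rw [← mk_toWord (x := x), hx]
  simp

lemma mk_single_true (a : α) : FreeGroup.mk [(a, true)] = FreeGroup.of a := rfl

lemma mk_single_false (a : α) : FreeGroup.mk [(a, false)] = (FreeGroup.of a)⁻¹ := by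
  rw [← mk_single_true, inv_mk]; rfl

lemma comm_pow (a : α) : ∀ (k : ℕ) (x : FreeGroup α), x.toWord.length = k →
    Commute x (FreeGroup.of a) → ∃ n : ℤ, x = FreeGroup.of a ^ n := by
  intro k
  induction k using Nat.strong_induction_on with
  | _ k ih =>
    intro x hk hcomm
    rcases hw : x.toWord with _ | ⟨⟨c, b⟩, t⟩
    · exact ⟨0, by rw [zpow_zero, ← toWord_eq_nil_iff, hw]⟩
    by_cases hca : c = a
    · subst hca
      obtain ⟨hx, ht⟩ := step hw
      have hlen : (FreeGroup.mk t).toWord.length < k := by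
        rw [ht, ← hk, hw]; simp
      have hcomm' : Commute (FreeGroup.mk t) (FreeGroup.of c) := by
        have h1 : Commute (FreeGroup.mk [(c, b)]) (FreeGroup.of c) := by
          cases b
          · rw [mk_single_false]; exact (Commute.refl _).inv_left
          · rw [mk_single_true]
        have : FreeGroup.mk t = (FreeGroup.mk [(c, b)])⁻¹ * x := by
          rw [hx]; group
        rw [this]
        exact h1.inv_left.mul_left hcomm
      obtain ⟨n, hn⟩ := ih _ hlen _ rfl hcomm'
      cases b
      · exact ⟨-1 + n, by rw [hx, hn, mk_single_false, zpow_add, zpow_neg_one]⟩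
      · exact ⟨1 + n, by rw [hx, hn, mk_single_true, zpow_one_add]⟩
    · -- head of x is not on letter a; look at x⁻¹
      rcases hw' : x⁻¹.toWord with _ | ⟨⟨c', b'⟩, t'⟩
      · have hx1 : x⁻¹ = 1 := toWord_eq_nil_iff.mp hw'
        exact ⟨0, by rw [zpow_zero, ← inv_inj, hx1, inv_one]⟩
      by_cases hca' : c' = a
      · subst hca'
        obtain ⟨hx, ht⟩ := step hw'
        have hlx : x⁻¹.toWord.length = k := by
          rw [toWord_inv, invRev_length, hk]
        have hlen : (FreeGroup.mk t').toWord.length < k := by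
          rw [ht, ← hlx, hw']; simp
        have hcomm0 : Commute x⁻¹ (FreeGroup.of c') := hcomm.inv_left
        have hcomm' : Commute (FreeGroup.mk t') (FreeGroup.of c') := by
          have h1 : Commute (FreeGroup.mk [(c', b')]) (FreeGroup.of c') := by
            cases b'
            · rw [mk_single_false]; exact (Commute.refl _).inv_left
            · rw [mk_single_true]
          have : FreeGroup.mk t' = (FreeGroup.mk [(c', b')])⁻¹ * x⁻¹ := by
            rw [hx]; group
          rw [this]
          exact h1.inv_left.mul_left hcomm0
        obtain ⟨n, hn⟩ := ih _ hlen _ rfl hcomm'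
        have hxinv : x⁻¹ = FreeGroup.of c' ^ (if b' then 1 + n else -1 + n) := by
          cases b'
          · simp only [Bool.false_eq_true, if_false]
            rw [hx, hn, mk_single_false, zpow_add, zpow_neg_one]
          · simp only [if_true]
            rw [hx, hn, mk_single_true, zpow_one_add]
        exact ⟨-(if b' then 1 + n else -1 + n), by rw [zpow_neg, ← hxinv, inv_inv]⟩
      · -- contradiction
        exfalso
        have hx : x = FreeGroup.mk ((c, b) :: t) := by rw [← hw, mk_toWord]
        have hredx : FreeGroup.reduce ((c, b) :: t) = (c, b) :: t := by
          rw [← hw]; exact reduce_toWord x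
        have hredx' : FreeGroup.reduce ((c', b') :: t') = (c', b') :: t' := by
          rw [← hw']; exact reduce_toWord x⁻¹
        have h1 : (FreeGroup.of a * x).toWord = (a, true) :: (c, b) :: t := by
          rw [← mk_single_true, hx, mul_mk, List.singleton_append,
            toWord_mk, reduce.cons, hredx]
          have : ¬((a, true).1 = (c, b).1 ∧ (a, true).2 = !(c, b).2) := by
            rintro ⟨h, -⟩; exact hca h.symm
          simp only [this, if_false]
        have hxinv : x⁻¹ = FreeGroup.mk ((c', b') :: t') := by rw [← hw', mk_toWord]
        have h2 : ((FreeGroup.of a)⁻¹ * x⁻¹).toWord = (a, false) :: (c', b') :: t' := by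
          rw [← mk_single_false, hxinv, mul_mk, List.singleton_append,
            toWord_mk, reduce.cons, hredx']
          have : ¬((a, false).1 = (c', b').1 ∧ (a, false).2 = !(c', b').2) := by
            rintro ⟨h, -⟩; exact hca' h.symm
          simp only [this, if_false]
        have h3 : (x * FreeGroup.of a).toWord = invRev ((a, false) :: (c', b') :: t') := by
          have hh : x * FreeGroup.of a = ((FreeGroup.of a)⁻¹ * x⁻¹)⁻¹ := by group
          rw [hh, toWord_inv, h2]
        have h4 : invRev ((a, false) :: (c', b') :: t') = x.toWord ++ [(a, true)] := by
          have h5 : invRev ((c', b') :: t') = x.toWord := by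
            rw [← hw', ← toWord_inv, inv_inv]
          have hsplit : ((a, false) :: (c', b') :: t' : List (α × Bool))
              = [(a, false)] ++ ((c', b') :: t') := rfl
          rw [hsplit]
          unfold invRev at h5 ⊢
          rw [List.map_append, List.reverse_append, h5]
          rfl
        have heq2 : (FreeGroup.of a * x).toWord = (x * FreeGroup.of a).toWord := by
          rw [hcomm.eq]
        rw [h1, h3, h4, hw] at heq2
        have hrep := cons_eq_append heq2
        have hch : ((c, b) : α × Bool) = (a, true) := by
          have h6 := congrArg List.head? hrep
          simp [List.replicate_succ] at h6
          exact Prod.ext h6.1 h6.2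
        exact hca (congrArg Prod.fst hch)

lemma conj_pow_self {α : Type*} (a : FreeGroup α) (m : ℤ) :
    (a ^ m)⁻¹ * a * a ^ m = a := by
  have hc : a * a ^ m = a ^ m * a := ((Commute.refl a).zpow_right m).eq
  rw [mul_assoc, hc, ← mul_assoc, inv_mul_cancel, one_mul]

lemma pow_of_injective {g : ℕ} (i : Fin g) {m m' : ℤ}
    (h : (FreeGroup.of i : FreeGroup (Fin g)) ^ m = FreeGroup.of i ^ m') : m = m' := by
  classical
  set f : FreeGroup (Fin g) →* Multiplicative ℤ :=
    FreeGroup.lift (fun j => if j = i then (Multiplicative.ofAdd (1 : ℤ)) else 1) with hf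
  have := congrArg f h
  rw [map_zpow, map_zpow, hf, FreeGroup.lift_apply_of, if_pos rfl] at this
  have h2 := congrArg Multiplicative.toAdd this
  simpa using h2

end Stmt10Aux



theorem stmt10 (g : ℕ) :
    -- an element of `A₁(F')` lies in the kernel of `λ ↦ φ_λ` iff each `λᵢ` is a power of `yᵢ`:
    (∀ (lam : Fin g → FP g) (φ : MulAut (FP g)),
      (∀ i, φ (FreeGroup.of i) = (lam i)⁻¹ * FreeGroup.of i * lam i) →
      φ (yProd g) = yProd g →
      (φ = MulEquiv.refl (FP g) ↔ ∃ n : Fin g → ℤ, ∀ i, lam i = (FreeGroup.of i) ^ (n i))) ∧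
    -- every power tuple gives an element of `A₁(F')` with trivial `φ_λ`:
    (∀ n : Fin g → ℤ, ∀ i,
      (MulEquiv.refl (FP g)) (FreeGroup.of i) =
        ((FreeGroup.of i : FP g) ^ (n i))⁻¹ * FreeGroup.of i * (FreeGroup.of i) ^ (n i)) ∧
    -- the parametrization of the kernel by `ℤ^g` is injective:
    Function.Injective (fun n : Fin g → ℤ => fun i => (FreeGroup.of i : FP g) ^ (n i)) := by
  classical
  refine ⟨?_, ?_, ?_⟩
  · intro lam φ hconj _hprod
    constructor
    · intro hφ
      have hcomm : ∀ i, Commute (lam i) (FreeGroup.of i) := by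
        intro i
        have h1 : FreeGroup.of i = (lam i)⁻¹ * FreeGroup.of i * lam i := by
          rw [← hconj i, hφ]; rfl
        have h2 : lam i * FreeGroup.of i = FreeGroup.of i * lam i := by
          conv_lhs => rw [h1]
          group
        exact h2
      choose n hn using fun i =>
        Stmt10Aux.comm_pow i (lam i).toWord.length (lam i) rfl (hcomm i)
      exact ⟨n, hn⟩
    · rintro ⟨n, hn⟩
      have hfix : ∀ i, φ (FreeGroup.of i) = FreeGroup.of i := by
        intro i
        rw [hconj i, hn i, Stmt10Aux.conj_pow_self]
      have hhom : (φ : FreeGroup (Fin g) →* FP g) = MonoidHom.id (FP g) :=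
        FreeGroup.ext_hom _ _ (fun i => hfix i)
      ext x
      exact DFunLike.congr_fun hhom x
  · intro n i
    rw [Stmt10Aux.conj_pow_self]
    rfl
  · intro n m h
    funext i
    exact Stmt10Aux.pow_of_injective i (congrFun h i)
end

section
/- Let F be free on x₁,…,x_g,y₁,…,y_g and F' free on y₁,…,y_g. The map φ: A₁(F') → Aut(F) defined by φ(λ)(yᵢ) = λᵢ⁻¹yᵢλᵢ and φ(λ)(xᵢ) = xᵢλᵢ (viewing F' ⊆ F) is an injective group homomorphism with image contained in Aut₀(F). -/
/-! **Statement 11.** Let `F` be free on `x₁,…,x_g,y₁,…,y_g` and `F'` free on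
`y₁,…,y_g`.  The map `φ : A₁(F') → Aut(F)` defined by `φ(λ)(yᵢ) = λᵢ⁻¹yᵢλᵢ` and
`φ(λ)(xᵢ) = xᵢλᵢ` (viewing `F' ⊆ F`) is an injective group homomorphism with image
contained in `Aut₀(F)` (the automorphisms fixing
`ω_g = (y₁⋯y_g)⁻¹(x₁y₁x₁⁻¹⋯x_gy_gx_g⁻¹)`).

`A₁(F')` is the group of tuples `λ` with `yᵢ ↦ λᵢ⁻¹yᵢλᵢ` an automorphism of `F'`
fixing `y₁⋯y_g`, with multiplication `(λμ)ᵢ = λᵢ·φ_λ(μᵢ)`; the homomorphism property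
is stated with respect to that multiplication. -/

abbrev FG (g : ℕ) := FreeGroup (Fin g ⊕ Fin g)
def xg {g : ℕ} (i : Fin g) : FG g := FreeGroup.of (Sum.inl i)
def yg {g : ℕ} (i : Fin g) : FG g := FreeGroup.of (Sum.inr i)

/-- The inclusion `F' → F`, `yᵢ ↦ yᵢ`. -/
def inclF (g : ℕ) : FP g →* FG g := FreeGroup.lift fun i => yg i

/-- `ω_g = (y₁⋯y_g)⁻¹(x₁y₁x₁⁻¹⋯x_gy_gx_g⁻¹)`. -/
def omegaW (g : ℕ) : FG g :=
  (((List.finRange g).map fun i => yg i).prod)⁻¹ *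
    ((List.finRange g).map fun i => xg i * yg i * (xg i)⁻¹).prod

/-- `A₁(F')`. -/
def A1 (g : ℕ) : Type :=
  {lam : Fin g → FP g // ∃ φ : MulAut (FP g),
    (∀ i, φ (FreeGroup.of i) = (lam i)⁻¹ * FreeGroup.of i * lam i) ∧
    φ (yProd g) = yProd g}

namespace Stmt11Aux

variable {g : ℕ}

def retr (g : ℕ) : FG g →* FP g :=
  FreeGroup.lift (Sum.elim (fun _ => 1) FreeGroup.of)

lemma retr_incl (w : FP g) : retr g (inclF g w) = w := by
  have h : (retr g).comp (inclF g) = MonoidHom.id (FP g) :=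
    FreeGroup.ext_hom _ _ (by intro i; simp [retr, inclF, yg])
  exact DFunLike.congr_fun h w

lemma incl_inj : Function.Injective (inclF g) := by
  intro u v h
  have := congrArg (retr g) h
  simpa [retr_incl] using this

def fwd (lam : Fin g → FP g) : FG g →* FG g :=
  FreeGroup.lift (Sum.elim (fun i => xg i * inclF g (lam i))
    (fun i => (inclF g (lam i))⁻¹ * yg i * inclF g (lam i)))

lemma fwd_x (lam : Fin g → FP g) (i : Fin g) :
    fwd lam (xg i) = xg i * inclF g (lam i) := by simp [fwd, xg]

lemma fwd_y (lam : Fin g → FP g) (i : Fin g) :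
    fwd lam (yg i) = (inclF g (lam i))⁻¹ * yg i * inclF g (lam i) := by simp [fwd, yg]

lemma fwd_incl {lam : Fin g → FP g} {φ : MulAut (FP g)}
    (h : ∀ i, φ (FreeGroup.of i) = (lam i)⁻¹ * FreeGroup.of i * lam i) (w : FP g) :
    fwd lam (inclF g w) = inclF g (φ w) := by
  have h2 : (fwd lam).comp (inclF g) = (inclF g).comp φ.toMonoidHom :=
    FreeGroup.ext_hom _ _ (by
      intro i
      simp [inclF, h i, fwd_y])
  exact DFunLike.congr_fun h2 w

noncomputable def phiA (a : A1 g) : MulAut (FP g) := a.2.choose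

lemma phiA_of (a : A1 g) (i : Fin g) :
    phiA a (FreeGroup.of i) = (a.1 i)⁻¹ * FreeGroup.of i * a.1 i := a.2.choose_spec.1 i

lemma phiA_yProd (a : A1 g) : phiA a (yProd g) = yProd g := a.2.choose_spec.2

noncomputable def mu (a : A1 g) : Fin g → FP g := fun i => ((phiA a).symm (a.1 i))⁻¹

lemma phiA_symm_of (a : A1 g) (i : Fin g) :
    (phiA a).symm (FreeGroup.of i) = (mu a i)⁻¹ * FreeGroup.of i * mu a i := by
  apply (phiA a).injective
  simp only [MulEquiv.apply_symm_apply, map_mul, map_inv, mu, inv_inv,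
    MulEquiv.apply_symm_apply, phiA_of]
  group

noncomputable def Phi (a : A1 g) : MulAut (FG g) where
  toFun := fwd a.1
  invFun := fwd (mu a)
  map_mul' := map_mul _
  left_inv := by
    intro w
    have h : (fwd (mu a)).comp (fwd a.1) = MonoidHom.id (FG g) := by
      apply FreeGroup.ext_hom
      rintro (i | i)
      · have h1 : fwd (mu a) (inclF g (a.1 i)) = inclF g ((phiA a).symm (a.1 i)) :=
          fwd_incl (phiA_symm_of a) _
        simp only [MonoidHom.comp_apply, MonoidHom.id_apply]
        show fwd (mu a) (fwd a.1 (xg i)) = xg i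
        rw [fwd_x, map_mul, fwd_x, h1]
        simp only [mu, map_inv]
        group
      · have h1 : fwd (mu a) (inclF g (a.1 i)) = inclF g ((phiA a).symm (a.1 i)) :=
          fwd_incl (phiA_symm_of a) _
        simp only [MonoidHom.comp_apply, MonoidHom.id_apply]
        show fwd (mu a) (fwd a.1 (yg i)) = yg i
        rw [fwd_y, map_mul, map_mul, map_inv, h1, fwd_y]
        simp only [mu, map_inv]
        group
    exact DFunLike.congr_fun h w
  right_inv := by
    intro w
    have hmu : ∀ i, inclF g (phiA a (mu a i)) = (inclF g (a.1 i))⁻¹ := by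
      intro i
      simp [mu, map_inv]
    have h : (fwd a.1).comp (fwd (mu a)) = MonoidHom.id (FG g) := by
      apply FreeGroup.ext_hom
      rintro (i | i)
      · have h1 : fwd a.1 (inclF g (mu a i)) = inclF g (phiA a (mu a i)) :=
          fwd_incl (phiA_of a) _
        simp only [MonoidHom.comp_apply, MonoidHom.id_apply]
        show fwd a.1 (fwd (mu a) (xg i)) = xg i
        rw [fwd_x, map_mul, fwd_x, h1, hmu]
        group
      · have h1 : fwd a.1 (inclF g (mu a i)) = inclF g (phiA a (mu a i)) :=
          fwd_incl (phiA_of a) _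
        simp only [MonoidHom.comp_apply, MonoidHom.id_apply]
        show fwd a.1 (fwd (mu a) (yg i)) = yg i
        rw [fwd_y, map_mul, map_mul, map_inv, h1, fwd_y, hmu]
        group
    exact DFunLike.congr_fun h w

lemma Phi_apply (a : A1 g) (w : FG g) : Phi a w = fwd a.1 w := rfl

lemma incl_yProd : inclF g (yProd g) = ((List.finRange g).map fun i => yg i).prod := by
  simp [yProd, map_list_prod, List.map_map, Function.comp_def, inclF]

lemma Phi_omega (a : A1 g) : Phi a (omegaW g) = omegaW g := by
  rw [Phi_apply, omegaW, map_mul, map_inv, ← incl_yProd,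
    fwd_incl (phiA_of a), phiA_yProd, incl_yProd]
  congr 1
  rw [map_list_prod, List.map_map]
  refine congrArg List.prod (List.map_congr_left fun i _ => ?_)
  simp only [Function.comp_apply, map_mul, map_inv, fwd_x, fwd_y]
  group

lemma aut_eq_on {φ ψ : MulAut (FP g)} (h : ∀ i, φ (FreeGroup.of i) = ψ (FreeGroup.of i))
    (w : FP g) : φ w = ψ w := by
  have h2 : φ.toMonoidHom = ψ.toMonoidHom := FreeGroup.ext_hom _ _ h
  exact DFunLike.congr_fun h2 w

end Stmt11Aux

open Stmt11Aux in
theorem stmt11 (g : ℕ) :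
    ∃ Φ : A1 g → MulAut (FG g),
      -- defining formulas:
      (∀ a : A1 g, ∀ i, Φ a (yg i) = (inclF g (a.1 i))⁻¹ * yg i * inclF g (a.1 i)) ∧
      (∀ a : A1 g, ∀ i, Φ a (xg i) = xg i * inclF g (a.1 i)) ∧
      -- the image lies in `Aut₀(F)`:
      (∀ a : A1 g, Φ a (omegaW g) = omegaW g) ∧
      -- `Φ` is a homomorphism for the `A₁` multiplication `(λμ)ᵢ = λᵢ·φ_λ(μᵢ)`:
      (∀ a b c : A1 g, ∀ ψ : MulAut (FP g),
        (∀ i, ψ (FreeGroup.of i) = (a.1 i)⁻¹ * FreeGroup.of i * a.1 i) →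
        (∀ i, c.1 i = a.1 i * ψ (b.1 i)) →
        Φ c = (Φ b).trans (Φ a)) ∧
      -- `Φ` is injective:
      Function.Injective Φ := by
  refine ⟨Phi, fun a i => fwd_y a.1 i, fun a i => fwd_x a.1 i, Phi_omega, ?_, ?_⟩
  · intro a b c ψ hψ hc
    have hψa : ∀ w, ψ w = phiA a w :=
      aut_eq_on (fun i => by rw [hψ i, phiA_of])
    apply MulEquiv.ext
    intro w
    have h : (Phi c : FG g →* FG g) =
        ((Phi a : MulAut (FG g)) : FG g →* FG g).comp (Phi b) := by
      apply FreeGroup.ext_hom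
      rintro (i | i)
      · show Phi c (xg i) = Phi a (Phi b (xg i))
        simp only [Phi_apply, fwd_x, map_mul, fwd_incl (phiA_of a)]
        rw [hc i, hψa, map_mul, mul_assoc]
      · show Phi c (yg i) = Phi a (Phi b (yg i))
        simp only [Phi_apply, fwd_y, map_mul, map_inv, fwd_incl (phiA_of a)]
        rw [hc i, hψa, map_mul]
        group
    exact DFunLike.congr_fun h w
  · intro a b h
    apply Subtype.ext
    funext i
    have := congrArg (fun e : MulAut (FG g) => e (xg i)) h
    simp only [Phi_apply, fwd_x] at this
    exact incl_inj (mul_left_cancel this)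
end

section
/- Let F be free on x₁,…,x_g,y₁,…,y_g, p: F → F' the epimorphism to the free group on y₁,…,y_g killing the xᵢ, and Aut₀(F) the automorphisms fixing ω_g = (y₁⋯y_g)⁻¹∏ᵢxᵢyᵢxᵢ⁻¹. Define L_g[k] = {h ∈ Aut₀(F) : p(h(xᵢ)) ∈ F'_{k+1} for all i}. Then each L_g[k] is a subgroup of Aut₀(F) and L_g[k+1] ⊆ L_g[k]. -/
/-- `p : F → F'`, `xᵢ ↦ 1`, `yᵢ ↦ yᵢ`. -/
def pr (g : ℕ) : FG g →* FP g :=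
  FreeGroup.lift (Sum.elim (fun _ => (1 : FP g)) (fun i => FreeGroup.of i))

open Subgroup
open scoped commutatorElement IsMulCommutative

theorem lcsMapLe {G H : Type*} [Group G] [Group H] (f : G →* H) (n : ℕ) :
    Subgroup.map f (Subgroup.lowerCentralSeries (⊤ : Subgroup G) n) ≤
      Subgroup.lowerCentralSeries (⊤ : Subgroup H) n := by
  rw [Subgroup.map_lowerCentralSeries]
  induction n with
  | zero => exact le_top
  | succ n ih =>
    rw [Subgroup.lowerCentralSeries_succ, Subgroup.lowerCentralSeries_succ]
    exact Subgroup.commutator_mono ih le_top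

/-! ### General group-theoretic lemmas -/

/-- A surjective homomorphism maps the lower central series onto the lower central series. -/
theorem lcs_map_eq {G H : Type*} [Group G] [Group H] (f : G →* H)
    (hf : Function.Surjective f) (n : ℕ) :
    Subgroup.map f (Subgroup.lowerCentralSeries (⊤ : Subgroup G) n) = Subgroup.lowerCentralSeries (⊤ : Subgroup H) n := by
  induction n with
  | zero => exact Subgroup.map_top_of_surjective f hf
  | succ n ih =>
    show Subgroup.map f ⁅Subgroup.lowerCentralSeries (⊤ : Subgroup G) n, ⊤⁆ = ⁅Subgroup.lowerCentralSeries (⊤ : Subgroup H) n, ⊤⁆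
    rw [Subgroup.map_commutator, ih, Subgroup.map_top_of_surjective f hf]

theorem lcs_quot_bot {G : Type*} [Group G] (n : ℕ) :
    Subgroup.lowerCentralSeries (⊤ : Subgroup (G ⧸ Subgroup.lowerCentralSeries (⊤ : Subgroup G) n)) n = ⊥ := by
  rw [← lcs_map_eq (QuotientGroup.mk' _) (QuotientGroup.mk'_surjective _) n, eq_bot_iff]
  rintro x ⟨y, hy, rfl⟩
  rw [Subgroup.mem_bot]
  exact (QuotientGroup.eq_one_iff y).mpr hy

theorem lcs_le_center {Q : Type*} [Group Q] (n : ℕ)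
    (hbot : Subgroup.lowerCentralSeries (⊤ : Subgroup Q) (n + 1) = ⊥) :
    Subgroup.lowerCentralSeries (⊤ : Subgroup Q) n ≤ Subgroup.center Q := by
  intro z hz
  rw [Subgroup.mem_center_iff]
  intro q
  have h : ⁅z, q⁆ ∈ Subgroup.lowerCentralSeries (⊤ : Subgroup Q) (n + 1) :=
    Subgroup.commutator_mem_commutator hz (Subgroup.mem_top q)
  rw [hbot, Subgroup.mem_bot] at h
  exact (commutatorElement_eq_one_iff_mul_comm.mp h).symm

/-- If all commutators `⁅a, h⁆` are central, then the commutators of `a` with elements of a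
generated subgroup lie in any subgroup containing the commutators with the generators. -/
theorem comm_mem_of_gen {H : Type*} [Group H] (a : H)
    (hc : ∀ h : H, ⁅a, h⁆ ∈ Subgroup.center H)
    (S : Set H) (C : Subgroup H) (hbase : ∀ s ∈ S, ⁅a, s⁆ ∈ C) :
    ∀ h ∈ Subgroup.closure S, ⁅a, h⁆ ∈ C := by
  intro h hh
  induction hh using Subgroup.closure_induction with
  | mem x hx => exact hbase x hx
  | one => simpa using one_mem C
  | mul x y hx hy px py =>
    have key : ⁅a, x * y⁆ = ⁅a, x⁆ * (x * ⁅a, y⁆ * x⁻¹) := by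
      simp only [commutatorElement_def]; group
    have hcen : x * ⁅a, y⁆ * x⁻¹ = ⁅a, y⁆ := by
      rw [Subgroup.mem_center_iff.mp (hc y) x]; group
    rw [key, hcen]
    exact mul_mem px py
  | inv x hx px =>
    have key : ⁅a, x⁻¹⁆ = x⁻¹ * ⁅a, x⁆⁻¹ * x := by
      simp only [commutatorElement_def]; group
    have hcen : x⁻¹ * ⁅a, x⁆⁻¹ * x = ⁅a, x⁆⁻¹ := by
      rw [Subgroup.mem_center_iff.mp ((Subgroup.center H).inv_mem (hc x)) x⁻¹]; group
    rw [key, hcen]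
    exact inv_mem px

/-- Finite generation of the graded quotients of the lower central series of a
finitely generated group: there is a finite `T ⊆ γⱼ` generating `γⱼ` modulo `γⱼ₊₁`. -/
theorem graded_fg {G : Type*} [Group G] (S : Set G) (hSfin : S.Finite)
    (hStop : Subgroup.closure S = ⊤) (j : ℕ) :
    ∃ T : Set G, T.Finite ∧ T ⊆ (Subgroup.lowerCentralSeries (⊤ : Subgroup G) j : Set G) ∧
      Subgroup.lowerCentralSeries (⊤ : Subgroup G) j ≤ Subgroup.closure T ⊔ Subgroup.lowerCentralSeries (⊤ : Subgroup G) (j + 1) := by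
  induction j with
  | zero =>
    refine ⟨S, hSfin, fun s _ => Subgroup.mem_top s, ?_⟩
    rw [Subgroup.lowerCentralSeries_zero, ← hStop]
    exact le_sup_left
  | succ j ih =>
    obtain ⟨T, hTfin, hTsub, hTgen⟩ := ih
    refine ⟨Set.image2 (fun t s => ⁅t, s⁆) T S, hTfin.image2 _ hSfin, ?_, ?_⟩
    · rintro _ ⟨t, ht, s, hs, rfl⟩
      exact Subgroup.commutator_mem_commutator (hTsub ht) (Subgroup.mem_top s)
    · -- work in the quotient by `γ_{j+2}`
      set N := Subgroup.lowerCentralSeries (⊤ : Subgroup G) (j + 2) with hN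
      set π := QuotientGroup.mk' N with hπ
      have hπsurj : Function.Surjective π := QuotientGroup.mk'_surjective N
      have hbot : Subgroup.lowerCentralSeries (⊤ : Subgroup (G ⧸ N)) (j + 2) = ⊥ := lcs_quot_bot (j + 2)
      have hcent : Subgroup.lowerCentralSeries (⊤ : Subgroup (G ⧸ N)) (j + 1) ≤ Subgroup.center (G ⧸ N) :=
        lcs_le_center (j + 1) hbot
      have c1 : ∀ a ∈ Subgroup.lowerCentralSeries (⊤ : Subgroup (G ⧸ N)) j, ∀ h : G ⧸ N,
          ⁅a, h⁆ ∈ Subgroup.center (G ⧸ N) :=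
        fun a ha h => hcent (Subgroup.commutator_mem_commutator ha (Subgroup.mem_top h))
      set C := Subgroup.closure (π '' Set.image2 (fun t s => ⁅t, s⁆) T S) with hC
      have hQgen : Subgroup.closure (π '' S) = ⊤ := by
        rw [← MonoidHom.map_closure, hStop]
        exact Subgroup.map_top_of_surjective π hπsurj
      -- every element of γⱼ(Q) has all commutators in C
      have main : ∀ a ∈ Subgroup.lowerCentralSeries (⊤ : Subgroup (G ⧸ N)) j, ∀ q : G ⧸ N, ⁅a, q⁆ ∈ C := by
        intro a ha
        have hac : a ∈ Subgroup.closure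
            (π '' T ∪ (Subgroup.lowerCentralSeries (⊤ : Subgroup (G ⧸ N)) (j + 1) : Set (G ⧸ N))) := by
          rw [Subgroup.closure_union, Subgroup.closure_eq]
          rw [← lcs_map_eq π hπsurj j] at ha
          obtain ⟨w, hw, rfl⟩ := ha
          have hw2 := hTgen hw
          have hmap : Subgroup.map π (Subgroup.closure T ⊔ Subgroup.lowerCentralSeries (⊤ : Subgroup G) (j + 1)) ≤
              Subgroup.closure (π '' T) ⊔ Subgroup.lowerCentralSeries (⊤ : Subgroup (G ⧸ N)) (j + 1) := by
            rw [Subgroup.map_sup, MonoidHom.map_closure, lcs_map_eq π hπsurj (j + 1)]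
          exact hmap ⟨w, hw2, rfl⟩
        clear ha
        have goal : a ∈ Subgroup.lowerCentralSeries (⊤ : Subgroup (G ⧸ N)) j ∧ ∀ q : G ⧸ N, ⁅a, q⁆ ∈ C := by
          induction hac using Subgroup.closure_induction with
          | mem x hx =>
            rcases hx with hx | hx
            · obtain ⟨t, ht, rfl⟩ := hx
              have hxL : (π t : G ⧸ N) ∈ Subgroup.lowerCentralSeries (⊤ : Subgroup (G ⧸ N)) j := by
                rw [← lcs_map_eq π hπsurj j]
                exact ⟨t, hTsub ht, rfl⟩
              refine ⟨hxL, fun q => ?_⟩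
              refine comm_mem_of_gen (π t) (c1 _ hxL) (π '' S) C ?_ q (by rw [hQgen]; trivial)
              rintro _ ⟨s, hs, rfl⟩
              have hcomm : (π ⁅t, s⁆ : G ⧸ N) = ⁅π t, π s⁆ := map_commutatorElement π t s
              rw [← hcomm]
              exact Subgroup.subset_closure ⟨⁅t, s⁆, Set.mem_image2_of_mem ht hs, rfl⟩
            · refine ⟨Subgroup.lowerCentralSeries_antitone ⊤ (Nat.le_succ j) hx, fun q => ?_⟩
              have h1 : ⁅x, q⁆ = 1 :=
                commutatorElement_eq_one_iff_mul_comm.mpr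
                  (Subgroup.mem_center_iff.mp (hcent hx) q).symm
              rw [h1]; exact one_mem C
          | one =>
            exact ⟨one_mem _, fun q => by rw [commutatorElement_one_left]; exact one_mem C⟩
          | mul x y hx hy px py =>
            refine ⟨mul_mem px.1 py.1, fun q => ?_⟩
            have key : ⁅x * y, q⁆ = x * ⁅y, q⁆ * x⁻¹ * ⁅x, q⁆ := by
              simp only [commutatorElement_def]; group
            have hcen : x * ⁅y, q⁆ * x⁻¹ = ⁅y, q⁆ := by
              rw [Subgroup.mem_center_iff.mp (c1 y py.1 q) x]; group
            rw [key, hcen]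
            exact mul_mem (py.2 q) (px.2 q)
          | inv x hx px =>
            refine ⟨inv_mem px.1, fun q => ?_⟩
            have key : ⁅x⁻¹, q⁆ = x⁻¹ * ⁅x, q⁆⁻¹ * x := by
              simp only [commutatorElement_def]; group
            have hcen : x⁻¹ * ⁅x, q⁆⁻¹ * x = ⁅x, q⁆⁻¹ := by
              rw [Subgroup.mem_center_iff.mp
                ((Subgroup.center (G ⧸ N)).inv_mem (c1 x px.1 q)) x⁻¹]; group
            rw [key, hcen]
            exact inv_mem (px.2 q)
        exact goal.2
      -- conclude
      intro w hw
      have hπw : (π w : G ⧸ N) ∈ Subgroup.lowerCentralSeries (⊤ : Subgroup (G ⧸ N)) (j + 1) := by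
        rw [← lcs_map_eq π hπsurj (j + 1)]
        exact ⟨w, hw, rfl⟩
      have hinC : (π w : G ⧸ N) ∈ C := by
        have hle : Subgroup.lowerCentralSeries (⊤ : Subgroup (G ⧸ N)) (j + 1) ≤ C := by
          show (⁅Subgroup.lowerCentralSeries (⊤ : Subgroup (G ⧸ N)) j, ⊤⁆ : Subgroup (G ⧸ N)) ≤ C
          rw [Subgroup.commutator_le]
          intro a ha q _
          exact main a ha q
        exact hle hπw
      have hmem : w ∈ Subgroup.comap π (Subgroup.map π (Subgroup.closure
          (Set.image2 (fun t s => ⁅t, s⁆) T S))) := by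
        rw [Subgroup.mem_comap, MonoidHom.map_closure]
        exact hinC
      rw [Subgroup.comap_map_eq, QuotientGroup.ker_mk'] at hmem
      exact hmem

/-- Hopf-type property for a finitely generated central subgroup. -/
theorem abHopf {Q : Type*} [Group Q] (M : Subgroup Q) (hM : M ≤ Subgroup.center Q)
    (T : Set Q) (hTfin : T.Finite) (hMT : Subgroup.closure T = M)
    (f : Q →* Q) (hmap : M ≤ Subgroup.map f M) (hto : ∀ x ∈ M, f x ∈ M)
    (x : Q) (hx : x ∈ M) (hfx : f x = 1) : x = 1 := by
  haveI hcomm : IsMulCommutative M :=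
    ⟨⟨fun a b => Subtype.ext ((Subgroup.mem_center_iff.mp (hM a.2) b).symm)⟩⟩
  haveI hfg : Group.FG M := by
    rw [Group.fg_iff_subgroup_fg]
    exact (Subgroup.fg_iff M).mpr ⟨T, hMT, hTfin⟩
  haveI : Module.Finite ℤ (Additive M) :=
    Module.Finite.iff_addGroup_fg.mpr (GroupFG.iff_add_fg.mp hfg)
  set e : M →* M := (f.domRestrict M).codRestrict M (fun y => hto y.1 y.2) with he
  have hesurj : Function.Surjective e := by
    rintro ⟨y, hy⟩
    obtain ⟨z, hz, hfz⟩ := hmap hy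
    exact ⟨⟨z, hz⟩, Subtype.ext hfz⟩
  set l : Additive M →ₗ[ℤ] Additive M := (MonoidHom.toAdditive e).toIntLinearMap with hl
  have hlsurj : Function.Surjective l := hesurj
  have hlinj : Function.Injective l :=
    IsNoetherian.injective_of_surjective_endomorphism l hlsurj
  have heinj : Function.Injective e := hlinj
  have h1 : e ⟨x, hx⟩ = e 1 := by
    apply Subtype.ext
    show f x = f 1
    rw [hfx, map_one]
  have h2 : (⟨x, hx⟩ : M) = 1 := heinj h1
  exact congrArg Subtype.val h2

/-- **Key lemma** (Hopf property of free nilpotent quotients): if `σ` is an endomorphism of a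
finitely generated group `G` which is surjective modulo `γ_k`, then `σ⁻¹(γ_k) ⊆ γ_k`. -/
theorem lemA {G : Type*} [Group G] (S : Set G) (hSfin : S.Finite)
    (hStop : Subgroup.closure S = ⊤) :
    ∀ (k : ℕ) (σ : G →* G),
      (∀ w : G, ∃ v, (σ v)⁻¹ * w ∈ Subgroup.lowerCentralSeries (⊤ : Subgroup G) k) →
      ∀ w, σ w ∈ Subgroup.lowerCentralSeries (⊤ : Subgroup G) k → w ∈ Subgroup.lowerCentralSeries (⊤ : Subgroup G) k := by
  intro k
  induction k with
  | zero => intro σ _ w _; exact Subgroup.mem_top w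
  | succ k ih =>
    intro σ hs w hw
    have hwk : w ∈ Subgroup.lowerCentralSeries (⊤ : Subgroup G) k := by
      refine ih σ (fun w' => ?_) w (Subgroup.lowerCentralSeries_antitone ⊤ (Nat.le_succ k) hw)
      obtain ⟨v, hv⟩ := hs w'
      exact ⟨v, Subgroup.lowerCentralSeries_antitone ⊤ (Nat.le_succ k) hv⟩
    set N := Subgroup.lowerCentralSeries (⊤ : Subgroup G) (k + 1) with hN
    set π := QuotientGroup.mk' N with hπ
    have hπsurj : Function.Surjective π := QuotientGroup.mk'_surjective N
    have hσN : N ≤ N.comap σ := fun n hn => lcsMapLe σ (k + 1) ⟨n, hn, rfl⟩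
    set σ' : (G ⧸ N) →* (G ⧸ N) := QuotientGroup.map N N σ hσN with hσ'
    have hcompat : ∀ u : G, σ' (π u) = π (σ u) := fun u => rfl
    have hσ'surj : Function.Surjective σ' := by
      intro q
      obtain ⟨w', rfl⟩ := hπsurj q
      obtain ⟨v, hv⟩ := hs w'
      refine ⟨π v, ?_⟩
      rw [hcompat]
      have h1 : π ((σ v)⁻¹ * w') = 1 := (QuotientGroup.eq_one_iff _).mpr hv
      rw [map_mul, map_inv, inv_mul_eq_one] at h1
      exact h1
    have hbot : Subgroup.lowerCentralSeries (⊤ : Subgroup (G ⧸ N)) (k + 1) = ⊥ := lcs_quot_bot (k + 1)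
    have hMcent : Subgroup.lowerCentralSeries (⊤ : Subgroup (G ⧸ N)) k ≤ Subgroup.center (G ⧸ N) :=
      lcs_le_center k hbot
    obtain ⟨T, hTfin, hTsub, hTgen⟩ := graded_fg S hSfin hStop k
    have hMT : Subgroup.closure (π '' T) = Subgroup.lowerCentralSeries (⊤ : Subgroup (G ⧸ N)) k := by
      apply le_antisymm
      · rw [Subgroup.closure_le]
        rintro _ ⟨t, ht, rfl⟩
        rw [SetLike.mem_coe, ← lcs_map_eq π hπsurj k]
        exact ⟨t, hTsub ht, rfl⟩
      · rw [← lcs_map_eq π hπsurj k]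
        rintro _ ⟨u, hu, rfl⟩
        have hu2 := hTgen hu
        have hmap : Subgroup.map π (Subgroup.closure T ⊔ N) ≤
            Subgroup.closure (π '' T) := by
          rw [Subgroup.map_sup, MonoidHom.map_closure, sup_le_iff]
          refine ⟨le_rfl, ?_⟩
          rintro _ ⟨n, hn, rfl⟩
          have hn1 : π n = 1 := (QuotientGroup.eq_one_iff _).mpr hn
          rw [hn1]
          exact one_mem _
        exact hmap ⟨u, hu2, rfl⟩
    have hmapM : Subgroup.lowerCentralSeries (⊤ : Subgroup (G ⧸ N)) k ≤
        Subgroup.map σ' (Subgroup.lowerCentralSeries (⊤ : Subgroup (G ⧸ N)) k) := (lcs_map_eq σ' hσ'surj k).ge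
    have hto : ∀ x ∈ Subgroup.lowerCentralSeries (⊤ : Subgroup (G ⧸ N)) k, σ' x ∈ Subgroup.lowerCentralSeries (⊤ : Subgroup (G ⧸ N)) k :=
      fun x hx => lcsMapLe σ' k ⟨x, hx, rfl⟩
    have hπwM : (π w : G ⧸ N) ∈ Subgroup.lowerCentralSeries (⊤ : Subgroup (G ⧸ N)) k := by
      rw [← lcs_map_eq π hπsurj k]
      exact ⟨w, hwk, rfl⟩
    have hσ'πw : σ' (π w) = 1 := by
      rw [hcompat]
      exact (QuotientGroup.eq_one_iff _).mpr hw
    have hone : (π w : G ⧸ N) = 1 :=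
      abHopf _ hMcent (π '' T) (hTfin.image π) hMT σ' hmapM hto (π w) hπwM hσ'πw
    exact (QuotientGroup.eq_one_iff w).mp hone

/-! ### The specific setting -/

/-- Section of `pr`: `yᵢ ↦ yᵢ`. -/
def sec (g : ℕ) : FP g →* FG g := FreeGroup.lift fun i => yg i

theorem pr_sec (g : ℕ) (w : FP g) : pr g (sec g w) = w := by
  have h : (pr g).comp (sec g) = MonoidHom.id (FP g) := by
    apply FreeGroup.ext_hom
    intro a
    simp [pr, sec, yg, FreeGroup.lift_apply_of]
  exact DFunLike.congr_fun h w

theorem pr_xg (g : ℕ) (i : Fin g) : pr g (xg i) = 1 := by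
  simp [pr, xg, FreeGroup.lift_apply_of]

theorem pr_yg (g : ℕ) (i : Fin g) : pr g (yg i) = FreeGroup.of i := by
  simp [pr, yg, FreeGroup.lift_apply_of]

/-- The endomorphism of `F'` induced by `h` on the `y`-side. -/
def sigmaOf {g : ℕ} (h : MulAut (FG g)) : FP g →* FP g :=
  FreeGroup.lift fun i => pr g (h (yg i))

theorem sigma_congr {g : ℕ} (k : ℕ) (h : MulAut (FG g))
    (hX : ∀ i, pr g (h (xg i)) ∈ Subgroup.lowerCentralSeries (⊤ : Subgroup (FP g)) k) :
    ∀ w : FG g,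
      (QuotientGroup.mk' (Subgroup.lowerCentralSeries (⊤ : Subgroup (FP g)) k)) (sigmaOf h (pr g w)) =
      (QuotientGroup.mk' (Subgroup.lowerCentralSeries (⊤ : Subgroup (FP g)) k)) (pr g (h w)) := by
  have hhom : (QuotientGroup.mk' (Subgroup.lowerCentralSeries (⊤ : Subgroup (FP g)) k)).comp ((sigmaOf h).comp (pr g)) =
      (QuotientGroup.mk' (Subgroup.lowerCentralSeries (⊤ : Subgroup (FP g)) k)).comp ((pr g).comp h.toMonoidHom) := by
    apply FreeGroup.ext_hom
    rintro (i | i)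
    · show QuotientGroup.mk' _ (sigmaOf h (pr g (xg i))) = QuotientGroup.mk' _ (pr g (h (xg i)))
      rw [pr_xg, map_one, map_one]
      exact ((QuotientGroup.eq_one_iff _).mpr (hX i)).symm
    · show QuotientGroup.mk' _ (sigmaOf h (pr g (yg i))) = QuotientGroup.mk' _ (pr g (h (yg i)))
      rw [pr_yg]
      simp [sigmaOf, FreeGroup.lift_apply_of]
  exact fun w => DFunLike.congr_fun hhom w

/-- The Lagrangian filtration subgroup `L_g[k]`. -/
def LagSubgroup (g k : ℕ) : Subgroup (MulAut (FG g)) where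
  carrier := {h | h (omegaW g) = omegaW g ∧
    ∀ i, pr g (h (xg i)) ∈ Subgroup.lowerCentralSeries (⊤ : Subgroup (FP g)) k}
  one_mem' := by
    refine ⟨rfl, fun i => ?_⟩
    show pr g ((1 : MulAut (FG g)) (xg i)) ∈ _
    rw [MulAut.one_apply, pr_xg]
    exact one_mem _
  mul_mem' := by
    rintro a b ⟨haω, haX⟩ ⟨hbω, hbX⟩
    refine ⟨?_, fun i => ?_⟩
    · show (a * b) (omegaW g) = omegaW g
      rw [MulAut.mul_apply, hbω, haω]
    · show pr g ((a * b) (xg i)) ∈ _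
      rw [MulAut.mul_apply]
      have hmem : sigmaOf a (pr g (b (xg i))) ∈ Subgroup.lowerCentralSeries (⊤ : Subgroup (FP g)) k :=
        lcsMapLe (sigmaOf a) k ⟨pr g (b (xg i)), hbX i, rfl⟩
      have he := sigma_congr k a haX (b (xg i))
      have h1 : (QuotientGroup.mk' (Subgroup.lowerCentralSeries (⊤ : Subgroup (FP g)) k)) (pr g (a (b (xg i)))) = 1 := by
        rw [← he]
        exact (QuotientGroup.eq_one_iff _).mpr hmem
      exact (QuotientGroup.eq_one_iff _).mp h1
  inv_mem' := by
    rintro h ⟨hω, hX⟩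
    have hinv : ∀ u : FG g, h (h⁻¹ u) = u := by
      intro u
      rw [MulAut.inv_def]
      exact h.apply_symm_apply u
    refine ⟨?_, fun i => ?_⟩
    · show h⁻¹ (omegaW g) = omegaW g
      rw [MulAut.inv_def, MulEquiv.symm_apply_eq]
      exact hω.symm
    · show pr g (h⁻¹ (xg i)) ∈ _
      have hs : ∀ w : FP g, ∃ v, (sigmaOf h v)⁻¹ * w ∈ Subgroup.lowerCentralSeries (⊤ : Subgroup (FP g)) k := by
        intro w
        refine ⟨pr g (h⁻¹ (sec g w)), ?_⟩
        have e1 := sigma_congr k h hX (h⁻¹ (sec g w))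
        rw [hinv, pr_sec] at e1
        have h1 : (QuotientGroup.mk' (Subgroup.lowerCentralSeries (⊤ : Subgroup (FP g)) k))
            ((sigmaOf h (pr g (h⁻¹ (sec g w))))⁻¹ * w) = 1 := by
          rw [map_mul, map_inv, e1, inv_mul_cancel]
        exact (QuotientGroup.eq_one_iff _).mp h1
      have hmem : sigmaOf h (pr g (h⁻¹ (xg i))) ∈ Subgroup.lowerCentralSeries (⊤ : Subgroup (FP g)) k := by
        have e2 := sigma_congr k h hX (h⁻¹ (xg i))
        rw [hinv, pr_xg, map_one] at e2
        exact (QuotientGroup.eq_one_iff _).mp e2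
      exact lemA (Set.range (FreeGroup.of : Fin g → FP g)) (Set.finite_range _)
        (FreeGroup.closure_range_of (Fin g)) k (sigmaOf h) hs _ hmem

theorem stmt12 (g : ℕ) :
    ∃ S : ℕ → Subgroup (MulAut (FG g)),
      (∀ k, 1 ≤ k → ∀ h : MulAut (FG g),
        h ∈ S k ↔ (h (omegaW g) = omegaW g ∧
          ∀ i, pr g (h (xg i)) ∈ Subgroup.lowerCentralSeries (⊤ : Subgroup (FP g)) k)) ∧
      (∀ k, 1 ≤ k → S (k + 1) ≤ S k) := by
  refine ⟨fun k => LagSubgroup g k, fun k _ h => Iff.rfl, fun k _ h hmem => ?_⟩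
  obtain ⟨hω, hX⟩ := hmem
  exact ⟨hω, fun i => Subgroup.lowerCentralSeries_antitone ⊤ (Nat.le_succ k) (hX i)⟩
end

section
/- With the Lagrangian filtration L_g[k] ⊆ Aut₀(F) as above, define J^L_k: L_g[k] → Hom(L, L_{k+1}(H')) by J^L_k(h)(a) = class of p(h(α)) in F'_{k+1}/F'_{k+2}, where α ∈ ker(p) is any lift of a ∈ L = ker(H → H'). Then J^L_k is well defined and satisfies the cocycle identity J^L_k(h₁∘h₂) = (h₂* ⊗ 1)·J^L_k(h₁) + (1 ⊗ h₁*)·J^L_k(h₂); in particular its restriction to the subgroup acting trivially on H' is a group homomorphism. -/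
open scoped commutatorElement


/-- Membership in `L_g[k]`. -/
def LagCond (g k : ℕ) (h : MulAut (FG g)) : Prop :=
  h (omegaW g) = omegaW g ∧ ∀ i, pr g (h (xg i)) ∈ (⊤ : Subgroup (FP g)).lowerCentralSeries k

section Aux
variable {g : ℕ}

@[simp] lemma pr_x (i : Fin g) : pr g (xg i) = 1 := FreeGroup.lift_apply_of
@[simp] lemma pr_y (i : Fin g) : pr g (yg i) = FreeGroup.of i := FreeGroup.lift_apply_of
@[simp] lemma incl_of (i : Fin g) : inclF g (FreeGroup.of i) = yg i := FreeGroup.lift_apply_of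

lemma hom_ext {M : Type*} [Group M] {f₁ f₂ : FG g →* M}
    (hx : ∀ i, f₁ (xg i) = f₂ (xg i)) (hy : ∀ i, f₁ (yg i) = f₂ (yg i)) : f₁ = f₂ := by
  apply FreeGroup.ext_hom
  rintro (i | i)
  exacts [hx i, hy i]

@[simp] lemma pr_incl (w : FP g) : pr g (inclF g w) = w := by
  have : (pr g).comp (inclF g) = MonoidHom.id (FP g) := by
    apply FreeGroup.ext_hom; intro i; simp [inclF]
  simpa using DFunLike.congr_fun this w

lemma factor_through_pr {M : Type*} [Group M] (f : FG g →* M) (hx : ∀ i, f (xg i) = 1)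
    (α : FG g) : f α = (FreeGroup.lift fun i => f (yg i)) (pr g α) := by
  have : f = (FreeGroup.lift fun i => f (yg i)).comp (pr g) := by
    apply hom_ext <;> intro i <;> simp [hx i]
  conv_lhs => rw [this]
  rfl

/-- images of `lcs n` are central mod `lcs (n+1)`. -/
lemma central_mod (G : Type*) [Group G] (n : ℕ) {u : G} (hu : u ∈ (⊤ : Subgroup G).lowerCentralSeries n)
    (q : G ⧸ (⊤ : Subgroup G).lowerCentralSeries (n + 1)) :
    Commute ((QuotientGroup.mk' ((⊤ : Subgroup G).lowerCentralSeries (n + 1))) u) q := by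
  induction q using QuotientGroup.induction_on with
  | H v =>
    show Commute _ ((QuotientGroup.mk' ((⊤ : Subgroup G).lowerCentralSeries (n + 1))) v)
    rw [← commutatorElement_eq_one_iff_commute, ← map_commutatorElement,
      QuotientGroup.mk'_apply, QuotientGroup.eq_one_iff]
    exact Subgroup.commutator_mem_commutator hu (Subgroup.mem_top v)

lemma mem_lcs_of_ker (n : ℕ) (h : MulAut (FG g))
    (hx : ∀ i, pr g (h (xg i)) ∈ (⊤ : Subgroup (FP g)).lowerCentralSeries n)
    {α : FG g} (hα : α ∈ (pr g).ker) : pr g (h α) ∈ (⊤ : Subgroup (FP g)).lowerCentralSeries n := by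
  set N := (⊤ : Subgroup (FP g)).lowerCentralSeries n
  set f : FG g →* (FP g ⧸ N) := (QuotientGroup.mk' N).comp ((pr g).comp h.toMonoidHom) with hf
  have hfx : ∀ i, f (xg i) = 1 := fun i => (QuotientGroup.eq_one_iff _).2 (hx i)
  have := factor_through_pr f hfx α
  rw [MonoidHom.mem_ker] at hα
  rw [hα, map_one] at this
  have : f α = 1 := this
  exact (QuotientGroup.eq_one_iff _).1 this

end Aux

section Key
variable {g : ℕ}

lemma keyLemma (n : ℕ) (h : MulAut (FG g))
    (hx : ∀ i, pr g (h (xg i)) ∈ (⊤ : Subgroup (FP g)).lowerCentralSeries n) :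
    ∀ γ ∈ (pr g).ker, γ ∈ (⊤ : Subgroup (FG g)).lowerCentralSeries 1 →
      pr g (h γ) ∈ (⊤ : Subgroup (FP g)).lowerCentralSeries (n + 1) := by
  set N := (⊤ : Subgroup (FP g)).lowerCentralSeries (n + 1) with hN
  set ψ : FG g →* FP g ⧸ N := (QuotientGroup.mk' N).comp ((pr g).comp h.toMonoidHom) with hψ
  set ψ' : FP g →* FP g ⧸ N := FreeGroup.lift fun i => ψ (yg i) with hψ'
  set χ : FG g →* FP g ⧸ N := ψ'.comp (pr g) with hχ
  have hχx : ∀ i, χ (xg i) = 1 := by intro i; simp [hχ]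
  have hχy : ∀ i, χ (yg i) = ψ (yg i) := by
    intro i; simp [hχ]; exact FreeGroup.lift_apply_of
  have hcen : ∀ i q, Commute (ψ (xg i)) q := by
    intro i q
    have : ψ (xg i) = (QuotientGroup.mk' N) (pr g (h (xg i))) := rfl
    rw [this]
    exact central_mod (FP g) n (hx i) q
  -- centrality of the "defect"
  have hc : ∀ w : FG g, ∀ q, Commute ((χ w)⁻¹ * ψ w) q := by
    intro w
    induction w using FreeGroup.induction_on with
    | C1 => simp
    | of s =>
      intro q
      show Commute ((χ (FreeGroup.of s))⁻¹ * ψ (FreeGroup.of s)) q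
      rcases s with i | i
      · have hx1 : χ (FreeGroup.of (Sum.inl i)) = 1 := hχx i
        rw [hx1, inv_one, one_mul]
        exact hcen i q
      · have hy1 : χ (FreeGroup.of (Sum.inr i)) = ψ (FreeGroup.of (Sum.inr i)) := hχy i
        rw [hy1, inv_mul_cancel]
        exact Commute.one_left q
    | inv_of s hs =>
      intro q
      show Commute ((χ (FreeGroup.of s)⁻¹)⁻¹ * ψ (FreeGroup.of s)⁻¹) q
      have hcp : Commute (χ (FreeGroup.of s)) (ψ (FreeGroup.of s)) := by
        have h1 : Commute (χ (FreeGroup.of s))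
            ((χ (FreeGroup.of s))⁻¹ * ψ (FreeGroup.of s)) := (hs (χ (FreeGroup.of s))).symm
        have h2 := (Commute.refl (χ (FreeGroup.of s))).mul_right h1
        simpa using h2
      have key : (χ (FreeGroup.of s)⁻¹)⁻¹ * ψ (FreeGroup.of s)⁻¹
          = ((χ (FreeGroup.of s))⁻¹ * ψ (FreeGroup.of s))⁻¹ := by
        rw [map_inv, map_inv, inv_inv, mul_inv_rev (χ (FreeGroup.of s))⁻¹, inv_inv]
        exact hcp.inv_right.eq
      rw [key]
      exact (hs q).inv_left
    | mul a b ha hb =>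
      intro q
      show Commute ((χ (a * b))⁻¹ * ψ (a * b)) q
      have : (χ (a * b))⁻¹ * ψ (a * b)
          = ((χ a)⁻¹ * ψ a) * ((χ b)⁻¹ * ψ b) := by
        have h2 := (ha ((χ b)⁻¹)).symm.eq
        calc (χ (a * b))⁻¹ * ψ (a * b)
            = (χ b)⁻¹ * ((χ a)⁻¹ * ψ a) * ψ b := by
              rw [map_mul, map_mul, mul_inv_rev (χ a)]; simp only [mul_assoc]
          _ = ((χ a)⁻¹ * ψ a) * (χ b)⁻¹ * ψ b := by rw [h2]
          _ = ((χ a)⁻¹ * ψ a) * ((χ b)⁻¹ * ψ b) := by simp only [mul_assoc]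
      rw [this]
      exact ((ha q).mul_left (hb q))
  have hmul : ∀ a b : FG g, (χ (a * b))⁻¹ * ψ (a * b)
      = ((χ a)⁻¹ * ψ a) * ((χ b)⁻¹ * ψ b) := by
    intro a b
    have h2 := (hc a ((χ b)⁻¹)).symm.eq
    calc (χ (a * b))⁻¹ * ψ (a * b)
        = (χ b)⁻¹ * ((χ a)⁻¹ * ψ a) * ψ b := by
          rw [map_mul, map_mul, mul_inv_rev]; simp only [mul_assoc]
      _ = ((χ a)⁻¹ * ψ a) * (χ b)⁻¹ * ψ b := by rw [h2]
      _ = ((χ a)⁻¹ * ψ a) * ((χ b)⁻¹ * ψ b) := by simp only [mul_assoc]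
  set D : FG g →* FP g ⧸ N := MonoidHom.mk' (fun w => (χ w)⁻¹ * ψ w) hmul with hD
  have hDker : (⊤ : Subgroup (FG g)).lowerCentralSeries 1 ≤ D.ker := by
    rw [lowerCentralSeries_one, commutator_def]
    refine Subgroup.commutator_le.mpr ?_
    intro p _ q _
    rw [MonoidHom.mem_ker, map_commutatorElement]
    exact commutatorElement_eq_one_iff_commute.mpr (hc p (D q))
  intro γ hker hlcs
  have h1 : D γ = 1 := hDker hlcs
  have h2 : χ γ = 1 := by
    rw [MonoidHom.mem_ker] at hker
    rw [hχ, MonoidHom.comp_apply, hker, map_one]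
  have h3 : ψ γ = 1 := by
    have : (χ γ)⁻¹ * ψ γ = 1 := h1
    rw [h2, inv_one, one_mul] at this
    exact this
  exact (QuotientGroup.eq_one_iff _).1 h3

end Key
section Parts
variable {g : ℕ}

lemma incl_lcs1 {w : FP g} (hw : w ∈ (⊤ : Subgroup (FP g)).lowerCentralSeries 1) :
    inclF g w ∈ (⊤ : Subgroup (FG g)).lowerCentralSeries 1 := by
  rw [lowerCentralSeries_one, commutator_def] at hw ⊢
  have : Subgroup.map (inclF g) ⁅(⊤ : Subgroup (FP g)), ⊤⁆ ≤ ⁅(⊤ : Subgroup (FG g)), ⊤⁆ := by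
    rw [Subgroup.map_commutator]
    exact Subgroup.commutator_mono le_top le_top
  exact this (Subgroup.mem_map_of_mem _ hw)

lemma partA (k : ℕ) (h : MulAut (FG g)) (hL : LagCond g k h)
    {α β : FG g} (hα : α ∈ (pr g).ker) (hβ : β ∈ (pr g).ker)
    (hd : α⁻¹ * β ∈ (⊤ : Subgroup (FG g)).lowerCentralSeries 1) :
    (pr g (h α))⁻¹ * pr g (h β) ∈ (⊤ : Subgroup (FP g)).lowerCentralSeries (k + 1) := by
  have e : (pr g (h α))⁻¹ * pr g (h β) = pr g (h (α⁻¹ * β)) := by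
    rw [map_mul, map_mul, map_inv, map_inv]
  rw [e]
  exact keyLemma k h hL.2 _ (mul_mem (inv_mem hα) hβ) hd

lemma partB (k : ℕ) (hk : 1 ≤ k) (h₁ h₂ : MulAut (FG g)) (hL₁ : LagCond g k h₁)
    (hL₂ : LagCond g k h₂) {α : FG g} (hα : α ∈ (pr g).ker)
    {α₂ : FG g} (hα₂ : α₂ ∈ (pr g).ker)
    (hd : α₂⁻¹ * (h₂ α) ∈ (⊤ : Subgroup (FG g)).lowerCentralSeries 1) :
    (pr g (h₁ (h₂ α)))⁻¹ * (pr g (h₁ α₂) * pr g (h₁ (inclF g (pr g (h₂ α))))) ∈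
      (⊤ : Subgroup (FP g)).lowerCentralSeries (k + 1) := by
  set γ : FG g := (h₂ α)⁻¹ * α₂ * inclF g (pr g (h₂ α)) with hγ
  have hprh₂ : pr g (h₂ α) ∈ (⊤ : Subgroup (FP g)).lowerCentralSeries 1 :=
    lowerCentralSeries_antitone _ hk (mem_lcs_of_ker k h₂ hL₂.2 hα)
  have hker : γ ∈ (pr g).ker := by
    have h1 : pr g α₂ = 1 := hα₂
    simp only [hγ, MonoidHom.mem_ker, map_mul, map_inv, h1, pr_incl, mul_one, one_mul,
      inv_mul_cancel]
  have hlcs : γ ∈ (⊤ : Subgroup (FG g)).lowerCentralSeries 1 := by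
    have h1 : (h₂ α)⁻¹ * α₂ = (α₂⁻¹ * (h₂ α))⁻¹ := by group
    refine mul_mem ?_ (incl_lcs1 hprh₂)
    rw [h1]
    exact inv_mem hd
  have hmain := keyLemma k h₁ hL₁.2 γ hker hlcs
  have e : pr g (h₁ γ) =
      (pr g (h₁ (h₂ α)))⁻¹ * (pr g (h₁ α₂) * pr g (h₁ (inclF g (pr g (h₂ α))))) := by
    simp only [hγ, map_mul, map_inv, mul_assoc]
  rwa [e] at hmain

end Parts
section Graded
variable {G : Type*} [Group G]

lemma tsl_mod (H₁ H₂ H₃ N : Subgroup G) [N.Normal]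
    (h1 : ⁅⁅H₂, H₃⁆, H₁⁆ ≤ N) (h2 : ⁅⁅H₃, H₁⁆, H₂⁆ ≤ N) : ⁅⁅H₁, H₂⁆, H₃⁆ ≤ N := by
  let f := QuotientGroup.mk' N
  have key : ∀ K : Subgroup G, K ≤ N ↔ Subgroup.map f K = ⊥ := by
    intro K
    rw [eq_bot_iff, Subgroup.map_le_iff_le_comap]
    have : Subgroup.comap f ⊥ = N := by
      rw [MonoidHom.comap_bot]
      exact QuotientGroup.ker_mk' N
    rw [this]
  rw [key] at h1 h2 ⊢
  rw [Subgroup.map_commutator, Subgroup.map_commutator] at h1 h2 ⊢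
  exact Subgroup.commutator_commutator_eq_bot_of_rotate h1 h2

lemma lcs_comm (m n : ℕ) :
    ⁅(⊤ : Subgroup G).lowerCentralSeries m, (⊤ : Subgroup G).lowerCentralSeries n⁆ ≤ (⊤ : Subgroup G).lowerCentralSeries (m + n + 1) := by
  induction n generalizing m with
  | zero =>
    rw [lowerCentralSeries_zero]
    exact le_of_eq rfl
  | succ n ih =>
    have e : (⊤ : Subgroup G).lowerCentralSeries (n + 1) = ⁅(⊤ : Subgroup G).lowerCentralSeries n, (⊤ : Subgroup G)⁆ := rfl
    rw [e, Subgroup.commutator_comm ((⊤ : Subgroup G).lowerCentralSeries m) ⁅(⊤ : Subgroup G).lowerCentralSeries n, (⊤ : Subgroup G)⁆]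
    apply tsl_mod ((⊤ : Subgroup G).lowerCentralSeries n) (⊤ : Subgroup G) ((⊤ : Subgroup G).lowerCentralSeries m)
    · -- ⁅⁅⊤, lcs m⁆, lcs n⁆ ≤ lcs (m + (n+1) + 1)
      calc ⁅⁅(⊤ : Subgroup G), (⊤ : Subgroup G).lowerCentralSeries m⁆, (⊤ : Subgroup G).lowerCentralSeries n⁆
          = ⁅⁅(⊤ : Subgroup G).lowerCentralSeries m, (⊤ : Subgroup G)⁆, (⊤ : Subgroup G).lowerCentralSeries n⁆ := by
            rw [Subgroup.commutator_comm (⊤ : Subgroup G) ((⊤ : Subgroup G).lowerCentralSeries m)]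
        _ ≤ (⊤ : Subgroup G).lowerCentralSeries (m + 1 + n + 1) := ih (m + 1)
        _ = (⊤ : Subgroup G).lowerCentralSeries (m + (n + 1) + 1) := by ring_nf
    · -- ⁅⁅lcs m, lcs n⁆, ⊤⁆ ≤ lcs (m + (n+1) + 1)
      calc ⁅⁅(⊤ : Subgroup G).lowerCentralSeries m, (⊤ : Subgroup G).lowerCentralSeries n⁆, (⊤ : Subgroup G)⁆
          ≤ ⁅(⊤ : Subgroup G).lowerCentralSeries (m + n + 1), (⊤ : Subgroup G)⁆ :=
            Subgroup.commutator_mono (ih m) le_rfl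
        _ = (⊤ : Subgroup G).lowerCentralSeries (m + n + 2) := rfl
        _ = (⊤ : Subgroup G).lowerCentralSeries (m + (n + 1) + 1) := by ring_nf

lemma commAux {Q : Type*} [Group Q] (A B U V : Q) (hU : ∀ q : Q, Commute U q)
    (hAV : Commute A V) : ⁅A * U, B * V⁆ = ⁅A, B⁆ := by
  have h2 : U * (B * V) = B * V * U := (hU (B * V)).eq
  have h3 : V * A⁻¹ = A⁻¹ * V := (hAV.inv_left).eq.symm
  simp only [commutatorElement_def, mul_inv_rev]
  calc A * U * (B * V) * (U⁻¹ * A⁻¹) * (V⁻¹ * B⁻¹)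
      = A * (U * (B * V) * U⁻¹) * (A⁻¹ * (V⁻¹ * B⁻¹)) := by simp only [mul_assoc]
    _ = A * (B * V) * (A⁻¹ * (V⁻¹ * B⁻¹)) := by rw [h2, mul_inv_cancel_right]
    _ = A * B * (V * A⁻¹) * (V⁻¹ * B⁻¹) := by simp only [mul_assoc]
    _ = A * B * (A⁻¹ * V) * (V⁻¹ * B⁻¹) := by rw [h3]
    _ = A * B * A⁻¹ * B⁻¹ := by simp only [mul_assoc, mul_inv_cancel_left]

/-- An endomorphism congruent to the identity modulo the commutator subgroup is
congruent to the identity on each graded level of the lower central series. -/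
lemma graded_identity (e : G →* G) (he : ∀ v, v⁻¹ * e v ∈ (⊤ : Subgroup G).lowerCentralSeries 1) :
    ∀ n, ∀ w ∈ (⊤ : Subgroup G).lowerCentralSeries n, w⁻¹ * e w ∈ (⊤ : Subgroup G).lowerCentralSeries (n + 1) := by
  intro n
  induction n with
  | zero => intro w _; exact he w
  | succ n ih =>
    -- the set of w with w⁻¹ e w ∈ lcs (n+2) is a subgroup
    set S : Subgroup G :=
      { carrier := {w | w⁻¹ * e w ∈ (⊤ : Subgroup G).lowerCentralSeries (n + 2)}
        one_mem' := by
          have h1 : (1 : G)⁻¹ * e 1 = 1 := by simp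
          show (1 : G)⁻¹ * e 1 ∈ (⊤ : Subgroup G).lowerCentralSeries (n + 2)
          rw [h1]; exact one_mem _
        mul_mem' := by
          intro a b ha hb
          have : (a * b)⁻¹ * e (a * b) = b⁻¹ * (a⁻¹ * e a) * b * (b⁻¹ * e b) := by
            rw [map_mul]; group
          rw [Set.mem_setOf_eq, this]
          exact mul_mem (Subgroup.Normal.conj_mem' inferInstance _ ha b) hb
        inv_mem' := by
          intro a ha
          have : (a⁻¹)⁻¹ * e a⁻¹ = a * (a⁻¹ * e a)⁻¹ * a⁻¹ := by
            rw [map_inv]; group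
          rw [Set.mem_setOf_eq, this]
          exact Subgroup.Normal.conj_mem inferInstance _ (inv_mem ha) a } with hS
    intro w hw
    have hle : (⊤ : Subgroup G).lowerCentralSeries (n + 1) ≤ S := by
      show ⁅(⊤ : Subgroup G).lowerCentralSeries n, (⊤ : Subgroup G)⁆ ≤ S
      refine Subgroup.commutator_le.mpr ?_
      intro a ha b _
      show (⁅a, b⁆)⁻¹ * e ⁅a, b⁆ ∈ (⊤ : Subgroup G).lowerCentralSeries (n + 2)
      have hu : a⁻¹ * e a ∈ (⊤ : Subgroup G).lowerCentralSeries (n + 1) := ih a ha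
      have hv : b⁻¹ * e b ∈ (⊤ : Subgroup G).lowerCentralSeries 1 := he b
      set u := a⁻¹ * e a with hu'
      set v := b⁻¹ * e b with hv'
      have hea : e a = a * u := by rw [hu']; group
      have heb : e b = b * v := by rw [hv']; group
      rw [map_commutatorElement, hea, heb]
      have hq : (QuotientGroup.mk' ((⊤ : Subgroup G).lowerCentralSeries (n + 2)))
          (⁅a, b⁆⁻¹ * ⁅a * u, b * v⁆) = 1 := by
        set f := QuotientGroup.mk' ((⊤ : Subgroup G).lowerCentralSeries (n + 2)) with hf
        have hU : ∀ q, Commute (f u) q := central_mod G (n + 1) hu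
        have hAV : Commute (f a) (f v) := by
          rw [← commutatorElement_eq_one_iff_commute, ← map_commutatorElement]
          exact (QuotientGroup.eq_one_iff _).2
            (lcs_comm n 1 (Subgroup.commutator_mem_commutator ha hv))
        simp only [map_mul, map_inv, map_commutatorElement]
        rw [commAux (f a) (f b) (f u) (f v) hU hAV]
        exact inv_mul_cancel _
      exact (QuotientGroup.eq_one_iff _).1 hq
    exact hle hw

end Graded
section Abel
variable {g : ℕ}

/-- Abelianization into `Finsupp` coordinates. -/
noncomputable def abF (g : ℕ) : FG g →* Multiplicative ((Fin g ⊕ Fin g) →₀ ℤ) :=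
  FreeGroup.lift fun s => Multiplicative.ofAdd (Finsupp.single s 1)

lemma mem_lcs1_of_abF {u : FG g} (hu : abF g u = 1) :
    u ∈ (⊤ : Subgroup (FG g)).lowerCentralSeries 1 := by
  let θa : ((Fin g ⊕ Fin g) →₀ ℤ) →+ Additive (Abelianization (FG g)) :=
    Finsupp.liftAddHom fun s =>
      zmultiplesHom _ (Additive.ofMul (Abelianization.of (FreeGroup.of s)))
  let θ : Multiplicative ((Fin g ⊕ Fin g) →₀ ℤ) →* Abelianization (FG g) :=
    AddMonoidHom.toMultiplicativeLeft θa
  have key : θ.comp (abF g) = Abelianization.of := by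
    apply FreeGroup.ext_hom; intro s
    show θ (abF g (FreeGroup.of s)) = Abelianization.of (FreeGroup.of s)
    rw [abF, FreeGroup.lift_apply_of]
    show (θa (Finsupp.single s 1)).toMul = _
    rw [Finsupp.liftAddHom_apply_single]
    rfl
  have h2 : θ (abF g u) = Abelianization.of u := DFunLike.congr_fun key u
  rw [hu, map_one] at h2
  have h3 : (QuotientGroup.mk u : FG g ⧸ commutator (FG g)) = 1 := h2.symm
  rw [lowerCentralSeries_one]
  exact (QuotientGroup.eq_one_iff u).1 h3

@[simp] lemma abF_apply_commutator {u : FG g} (hu : u ∈ (⊤ : Subgroup (FG g)).lowerCentralSeries 1) :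
    abF g u = 1 := by
  rw [lowerCentralSeries_one] at hu
  exact Abelianization.commutator_subset_ker (abF g) hu

end Abel
section Heisenberg

@[ext] structure Heis where
  a : ℤ
  b : ℤ
  c : ℤ

namespace Heis

instance : One Heis := ⟨⟨0, 0, 0⟩⟩
instance : Mul Heis := ⟨fun u v => ⟨u.a + v.a, u.b + v.b, u.c + v.c + u.a * v.b⟩⟩
instance : Inv Heis := ⟨fun u => ⟨-u.a, -u.b, -u.c + u.a * u.b⟩⟩

@[simp] lemma mul_a (u v : Heis) : (u * v).a = u.a + v.a := rfl
@[simp] lemma mul_b (u v : Heis) : (u * v).b = u.b + v.b := rfl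
@[simp] lemma mul_c (u v : Heis) : (u * v).c = u.c + v.c + u.a * v.b := rfl
@[simp] lemma inv_a (u : Heis) : (u⁻¹).a = -u.a := rfl
@[simp] lemma inv_b (u : Heis) : (u⁻¹).b = -u.b := rfl
@[simp] lemma inv_c (u : Heis) : (u⁻¹).c = -u.c + u.a * u.b := rfl
@[simp] lemma one_a : (1 : Heis).a = 0 := rfl
@[simp] lemma one_b : (1 : Heis).b = 0 := rfl
@[simp] lemma one_c : (1 : Heis).c = 0 := rfl

instance : Group Heis :=
  Group.ofLeftAxioms
    (fun u v w => by ext <;> simp <;> ring)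
    (fun u => by ext <;> simp)
    (fun u => by ext <;> simp <;> ring)

/-- central elements -/
def zc (t : ℤ) : Heis := ⟨0, 0, t⟩

@[simp] lemma zc_a (t : ℤ) : (zc t).a = 0 := rfl
@[simp] lemma zc_b (t : ℤ) : (zc t).b = 0 := rfl
@[simp] lemma zc_c (t : ℤ) : (zc t).c = t := rfl

lemma zc_comm (t : ℤ) (u : Heis) : zc t * u = u * zc t := by
  ext <;> simp [zc] <;> ring

lemma zc_mul (s t : ℤ) : zc s * zc t = zc (s + t) := by ext <;> simp [zc]

@[simp] lemma zc_zero : zc 0 = 1 := rfl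

lemma conj_eq (x y : Heis) : x * y * x⁻¹ = y * zc (x.a * y.b - y.a * x.b) := by
  ext <;> simp [zc] <;> ring

lemma prod_mul_zc (l : List (Heis × ℤ)) :
    (l.map fun p => p.1 * zc p.2).prod
      = (l.map Prod.fst).prod * zc ((l.map Prod.snd).sum) := by
  induction l with
  | nil => simp
  | cons p l ih =>
    simp only [List.map_cons, List.prod_cons, List.sum_cons, ih]
    calc p.1 * zc p.2 * ((l.map Prod.fst).prod * zc ((l.map Prod.snd).sum))
        = p.1 * (zc p.2 * (l.map Prod.fst).prod) * zc ((l.map Prod.snd).sum) := by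
          simp only [mul_assoc]
      _ = p.1 * ((l.map Prod.fst).prod * zc p.2) * zc ((l.map Prod.snd).sum) := by
          rw [zc_comm]
      _ = p.1 * (l.map Prod.fst).prod * (zc p.2 * zc ((l.map Prod.snd).sum)) := by
          simp only [mul_assoc]
      _ = p.1 * (l.map Prod.fst).prod * zc (p.2 + (l.map Prod.snd).sum) := by
          rw [zc_mul]

end Heis

variable {g : ℕ}

/-- Evaluation of any homomorphism on `omegaW`. -/
lemma omega_eval (Ψ : FG g →* Heis) :
    Ψ (omegaW g) = Heis.zc (((List.finRange g).map fun m =>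
      (Ψ (xg m)).a * (Ψ (yg m)).b - (Ψ (yg m)).a * (Ψ (xg m)).b).sum) := by
  set t : Fin g → ℤ := fun m =>
    (Ψ (xg m)).a * (Ψ (yg m)).b - (Ψ (yg m)).a * (Ψ (xg m)).b with ht
  have hconj : ∀ m : Fin g, Ψ (xg m * yg m * (xg m)⁻¹) = Ψ (yg m) * Heis.zc (t m) := by
    intro m
    rw [map_mul, map_mul, map_inv, Heis.conj_eq]
  have hA : Ψ (((List.finRange g).map fun i => yg i).prod)
      = ((List.finRange g).map fun m => Ψ (yg m)).prod := by
    rw [map_list_prod, List.map_map]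
    rfl
  have hB : Ψ (((List.finRange g).map fun i => xg i * yg i * (xg i)⁻¹).prod)
      = ((List.finRange g).map fun m => Ψ (yg m)).prod
          * Heis.zc (((List.finRange g).map t).sum) := by
    rw [map_list_prod, List.map_map]
    calc ((List.finRange g).map (⇑Ψ ∘ fun i => xg i * yg i * (xg i)⁻¹)).prod
        = ((List.finRange g).map fun m => Ψ (yg m) * Heis.zc (t m)).prod :=
          congrArg List.prod (List.map_congr_left fun m _ => hconj m)
      _ = (((List.finRange g).map fun m => (Ψ (yg m), t m)).map
            fun p => p.1 * Heis.zc p.2).prod := by rw [List.map_map]; rfl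
      _ = ((List.finRange g).map fun m => Ψ (yg m)).prod
            * Heis.zc (((List.finRange g).map t).sum) := by
          rw [Heis.prod_mul_zc, List.map_map, List.map_map]
          rfl
  rw [omegaW, map_mul, map_inv, hA, hB, inv_mul_cancel_left]

end Heisenberg
section Symplectic
variable {g : ℕ}

def aH : Heis →* Multiplicative ℤ where
  toFun u := Multiplicative.ofAdd u.a
  map_one' := rfl
  map_mul' u v := rfl

def bH : Heis →* Multiplicative ℤ where
  toFun u := Multiplicative.ofAdd u.b
  map_one' := rfl
  map_mul' u v := rfl

noncomputable def evS (g : ℕ) (s : Fin g ⊕ Fin g) :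
    Multiplicative ((Fin g ⊕ Fin g) →₀ ℤ) →* Multiplicative ℤ :=
  AddMonoidHom.toMultiplicative (Finsupp.applyAddHom s)

lemma evS_apply (s : Fin g ⊕ Fin g) (x : (Fin g ⊕ Fin g) →₀ ℤ) :
    evS g s (Multiplicative.ofAdd x) = Multiplicative.ofAdd (x s) := rfl

noncomputable def YcP (g : ℕ) (i : Fin g) : FP g →* Multiplicative ℤ :=
  FreeGroup.lift fun m => Multiplicative.ofAdd (if m = i then (1 : ℤ) else 0)

lemma YcP_lcs1 {i : Fin g} {w : FP g} (hw : w ∈ (⊤ : Subgroup (FP g)).lowerCentralSeries 1) :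
    YcP g i w = 1 := by
  rw [lowerCentralSeries_one] at hw
  exact Abelianization.commutator_subset_ker (YcP g i) hw

lemma sum_delta (f : Fin g → ℤ) (i : Fin g) :
    ((List.finRange g).map fun m => f m * (if m = i then (1 : ℤ) else 0)).sum = f i := by
  have h0 : ((List.finRange g).map fun m => f m * (if m = i then (1 : ℤ) else 0)).sum
      = ∑ m : Fin g, f m * (if m = i then (1 : ℤ) else 0) :=
    (Fin.sum_univ_def _).symm
  rw [h0]
  simp [mul_ite]

end Symplectic
section HeisFix
variable {g : ℕ}

lemma Y_invariant (h : MulAut (FG g))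
    (ht : ∀ w, (pr g w)⁻¹ * pr g (h w) ∈ (⊤ : Subgroup (FP g)).lowerCentralSeries 1)
    (i : Fin g) (w : FG g) : YcP g i (pr g (h w)) = YcP g i (pr g w) := by
  have h1 := YcP_lcs1 (i := i) (ht w)
  rw [map_mul, map_inv] at h1
  exact (inv_mul_eq_one.mp h1).symm

lemma heis_fix (h : MulAut (FG g)) (hω : h (omegaW g) = omegaW g)
    (ht : ∀ w, (pr g w)⁻¹ * pr g (h w) ∈ (⊤ : Subgroup (FP g)).lowerCentralSeries 1)
    (j i : Fin g) :
    evS g (Sum.inl j) (abF g (h (xg i))) = evS g (Sum.inl j) (abF g (xg i)) := by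
  set Φ : FG g →* Heis := FreeGroup.lift
    (Sum.elim (fun m => (⟨if m = j then 1 else 0, 0, 0⟩ : Heis))
              (fun m => (⟨0, if m = i then 1 else 0, 0⟩ : Heis))) with hΦ
  have gx : ∀ m, Φ (xg m) = ⟨if m = j then 1 else 0, 0, 0⟩ := fun m => FreeGroup.lift_apply_of
  have gy : ∀ m, Φ (yg m) = ⟨0, if m = i then 1 else 0, 0⟩ := fun m => FreeGroup.lift_apply_of
  have hbΦ : bH.comp Φ = (YcP g i).comp (pr g) := by
    apply hom_ext <;> intro m
    · rw [MonoidHom.comp_apply, MonoidHom.comp_apply, gx m, pr_x, map_one]; rfl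
    · rw [MonoidHom.comp_apply, MonoidHom.comp_apply, gy m, pr_y]
      show Multiplicative.ofAdd (if m = i then (1 : ℤ) else 0) = YcP g i (FreeGroup.of m)
      rw [YcP, FreeGroup.lift_apply_of]
  have hb : ∀ w, (Φ (h w)).b = Multiplicative.toAdd (YcP g i (pr g w)) := by
    intro w
    have e1 : bH (Φ (h w)) = YcP g i (pr g (h w)) := DFunLike.congr_fun hbΦ (h w)
    rw [Y_invariant h ht i w] at e1
    exact congrArg Multiplicative.toAdd e1
  have hbx : ∀ m, (Φ (h (xg m))).b = 0 := by
    intro m; rw [hb, pr_x, map_one]; rfl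
  have hby : ∀ m, (Φ (h (yg m))).b = if m = i then 1 else 0 := by
    intro m; rw [hb, pr_y]
    show Multiplicative.toAdd (YcP g i (FreeGroup.of m)) = _
    rw [YcP, FreeGroup.lift_apply_of]
    rfl
  set Φh : FG g →* Heis := Φ.comp h.toMonoidHom with hΦh
  have hval : Φh (omegaW g) = Φ (omegaW g) := by
    show Φ (h (omegaW g)) = Φ (omegaW g)
    rw [hω]
  rw [omega_eval Φ, omega_eval Φh] at hval
  have hsum := congrArg Heis.c hval
  simp only [Heis.zc_c] at hsum
  have eL : ((List.finRange g).map fun m =>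
        (Φh (xg m)).a * (Φh (yg m)).b - (Φh (yg m)).a * (Φh (xg m)).b).sum
      = (Φ (h (xg i))).a := by
    have hcg : ∀ m ∈ List.finRange g,
        (Φh (xg m)).a * (Φh (yg m)).b - (Φh (yg m)).a * (Φh (xg m)).b
        = (fun m => (Φ (h (xg m))).a) m * (if m = i then (1 : ℤ) else 0) := by
      intro m _
      show (Φ (h (xg m))).a * (Φ (h (yg m))).b - (Φ (h (yg m))).a * (Φ (h (xg m))).b = _
      rw [hbx m, hby m]
      ring
    rw [List.map_congr_left hcg, sum_delta]
  have eR : ((List.finRange g).map fun m =>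
        (Φ (xg m)).a * (Φ (yg m)).b - (Φ (yg m)).a * (Φ (xg m)).b).sum
      = if i = j then (1 : ℤ) else 0 := by
    have hcg : ∀ m ∈ List.finRange g,
        (Φ (xg m)).a * (Φ (yg m)).b - (Φ (yg m)).a * (Φ (xg m)).b
        = (fun m => if m = j then (1 : ℤ) else 0) m * (if m = i then (1 : ℤ) else 0) := by
      intro m _
      rw [gx m, gy m]
      show (if m = j then (1 : ℤ) else 0) * (if m = i then (1 : ℤ) else 0) - 0 * 0 = _
      ring
    rw [List.map_congr_left hcg, sum_delta]
  rw [eL, eR] at hsum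
  have haΦ : (evS g (Sum.inl j)).comp (abF g) = aH.comp Φ := by
    apply hom_ext <;> intro m
    · rw [MonoidHom.comp_apply, MonoidHom.comp_apply, gx m]
      show evS g (Sum.inl j) (abF g (xg m)) = Multiplicative.ofAdd (if m = j then (1 : ℤ) else 0)
      simp only [abF, xg, FreeGroup.lift_apply_of, evS_apply]
      congr 1
      rw [Finsupp.single_apply]
      simp
    · rw [MonoidHom.comp_apply, MonoidHom.comp_apply, gy m]
      show evS g (Sum.inl j) (abF g (yg m)) = Multiplicative.ofAdd (0 : ℤ)
      simp only [abF, yg, FreeGroup.lift_apply_of, evS_apply]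
      congr 1
      rw [Finsupp.single_apply]
      simp
  have e2 : evS g (Sum.inl j) (abF g (h (xg i))) = aH (Φ (h (xg i))) :=
    DFunLike.congr_fun haΦ (h (xg i))
  have e3 : evS g (Sum.inl j) (abF g (xg i)) = aH (Φ (xg i)) :=
    DFunLike.congr_fun haΦ (xg i)
  rw [e2, e3, gx i]
  show Multiplicative.ofAdd (Φ (h (xg i))).a
      = Multiplicative.ofAdd ((⟨if i = j then 1 else 0, 0, 0⟩ : Heis)).a
  rw [hsum]

end HeisFix
section Final
variable {g : ℕ}

lemma fix_L (h : MulAut (FG g)) (hω : h (omegaW g) = omegaW g)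
    (ht : ∀ w, (pr g w)⁻¹ * pr g (h w) ∈ (⊤ : Subgroup (FP g)).lowerCentralSeries 1)
    {α : FG g} (hα : α ∈ (pr g).ker) : α⁻¹ * h α ∈ (⊤ : Subgroup (FG g)).lowerCentralSeries 1 := by
  apply mem_lcs1_of_abF
  rw [map_mul, map_inv]
  suffices hs : abF g (h α) = abF g α by rw [hs, inv_mul_cancel]
  have hcomp : ∀ s, evS g s (abF g (h α)) = evS g s (abF g α) := by
    rintro (j | i)
    · set A : FG g →* Multiplicative ℤ := (evS g (Sum.inl j)).comp (abF g) with hA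
      set E : FG g →* Multiplicative ℤ := A.comp h.toMonoidHom / A with hE
      have hEx : ∀ m, E (xg m) = 1 := by
        intro m
        have hfix : A (h (xg m)) = A (xg m) := heis_fix h hω ht j m
        show A.comp h.toMonoidHom (xg m) / A (xg m) = 1
        rw [MonoidHom.comp_apply]
        exact div_eq_one.mpr hfix
      have hfac := factor_through_pr E hEx α
      rw [MonoidHom.mem_ker] at hα
      rw [hα, map_one] at hfac
      have hEα : A (h α) / A α = 1 := by
        have : E α = A (h α) / A α := rfl
        rw [← this, hfac]
      exact div_eq_one.mp hEα
    · have hYe : (evS g (Sum.inr i)).comp (abF g) = (YcP g i).comp (pr g) := by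
        apply hom_ext <;> intro m
        · show evS g (Sum.inr i) (abF g (xg m)) = YcP g i (pr g (xg m))
          rw [pr_x, map_one]
          simp only [abF, xg, FreeGroup.lift_apply_of, evS_apply]
          rw [Finsupp.single_apply]
          simp
        · show evS g (Sum.inr i) (abF g (yg m)) = YcP g i (pr g (yg m))
          rw [pr_y]
          simp only [abF, yg, FreeGroup.lift_apply_of, evS_apply, YcP]
          rw [Finsupp.single_apply]
          simp
      have e1 := DFunLike.congr_fun hYe (h α)
      have e2 := DFunLike.congr_fun hYe α
      rw [MonoidHom.comp_apply, MonoidHom.comp_apply] at e1 e2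
      rw [e1, e2, Y_invariant h ht i α]
  have htoAdd : Multiplicative.toAdd (abF g (h α)) = Multiplicative.toAdd (abF g α) := by
    apply Finsupp.ext
    intro s
    exact congrArg Multiplicative.toAdd (hcomp s)
  exact Multiplicative.toAdd.injective htoAdd

lemma partC (k : ℕ) (hk : 1 ≤ k) (h₁ h₂ : MulAut (FG g)) (hL₁ : LagCond g k h₁)
    (hL₂ : LagCond g k h₂)
    (ht₁ : ∀ w, (pr g w)⁻¹ * pr g (h₁ w) ∈ (⊤ : Subgroup (FP g)).lowerCentralSeries 1)
    (ht₂ : ∀ w, (pr g w)⁻¹ * pr g (h₂ w) ∈ (⊤ : Subgroup (FP g)).lowerCentralSeries 1)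
    {α : FG g} (hα : α ∈ (pr g).ker) :
    (pr g (h₁ (h₂ α)))⁻¹ * (pr g (h₁ α) * pr g (h₂ α)) ∈
      (⊤ : Subgroup (FP g)).lowerCentralSeries (k + 1) := by
  have hd : α⁻¹ * h₂ α ∈ (⊤ : Subgroup (FG g)).lowerCentralSeries 1 := fix_L h₂ hL₂.1 ht₂ hα
  have hb := partB k hk h₁ h₂ hL₁ hL₂ hα hα hd
  set e : FP g →* FP g := (pr g).comp ((h₁.toMonoidHom).comp (inclF g)) with he
  have hei : ∀ v, v⁻¹ * e v ∈ (⊤ : Subgroup (FP g)).lowerCentralSeries 1 := by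
    intro v
    have := ht₁ (inclF g v)
    rwa [pr_incl] at this
  have hw : pr g (h₂ α) ∈ (⊤ : Subgroup (FP g)).lowerCentralSeries k := mem_lcs_of_ker k h₂ hL₂.2 hα
  have h2 : (pr g (h₂ α))⁻¹ * e (pr g (h₂ α)) ∈ (⊤ : Subgroup (FP g)).lowerCentralSeries (k + 1) :=
    graded_identity e hei k _ hw
  have hu : e (pr g (h₂ α)) = pr g (h₁ (inclF g (pr g (h₂ α)))) := rfl
  have key : (pr g (h₁ (h₂ α)))⁻¹ * (pr g (h₁ α) * pr g (h₂ α))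
      = ((pr g (h₁ (h₂ α)))⁻¹ * (pr g (h₁ α) * pr g (h₁ (inclF g (pr g (h₂ α))))))
        * ((pr g (h₂ α))⁻¹ * e (pr g (h₂ α)))⁻¹ := by
    rw [hu]
    group
  rw [key]
  exact mul_mem hb (inv_mem h2)

end Final


theorem stmt13 (g k : ℕ) (hk : 1 ≤ k) :
    -- (a) well-definedness: the class of `p(h(α))` mod `F'_{k+2}` depends only on the
    -- class of `α ∈ Λ` in `L`:
    (∀ h : MulAut (FG g), LagCond g k h →
      ∀ α β : FG g, α ∈ (pr g).ker → β ∈ (pr g).ker →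
        α⁻¹ * β ∈ (⊤ : Subgroup (FG g)).lowerCentralSeries 1 →
        (pr g (h α))⁻¹ * pr g (h β) ∈ (⊤ : Subgroup (FP g)).lowerCentralSeries (k + 1)) ∧
    -- (b) the cocycle identity:
    (∀ h₁ h₂ : MulAut (FG g), LagCond g k h₁ → LagCond g k h₂ →
      ∀ α : FG g, α ∈ (pr g).ker →
      ∀ α₂ : FG g, α₂ ∈ (pr g).ker →
        α₂⁻¹ * (h₂ α) ∈ (⊤ : Subgroup (FG g)).lowerCentralSeries 1 →
        (pr g (h₁ (h₂ α)))⁻¹ *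
            (pr g (h₁ α₂) * pr g (h₁ (inclF g (pr g (h₂ α))))) ∈
          (⊤ : Subgroup (FP g)).lowerCentralSeries (k + 1)) ∧
    -- (c) on the subgroup acting trivially on `H'`, `J^L_k` is a homomorphism:
    (∀ h₁ h₂ : MulAut (FG g), LagCond g k h₁ → LagCond g k h₂ →
      (∀ w : FG g, (pr g w)⁻¹ * pr g (h₁ w) ∈ (⊤ : Subgroup (FP g)).lowerCentralSeries 1) →
      (∀ w : FG g, (pr g w)⁻¹ * pr g (h₂ w) ∈ (⊤ : Subgroup (FP g)).lowerCentralSeries 1) →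
      ∀ α : FG g, α ∈ (pr g).ker →
        (pr g (h₁ (h₂ α)))⁻¹ * (pr g (h₁ α) * pr g (h₂ α)) ∈
          (⊤ : Subgroup (FP g)).lowerCentralSeries (k + 1)) := by
  refine ⟨?_, ?_, ?_⟩
  · intro h hL α β hα hβ hd
    exact partA k h hL hα hβ hd
  · intro h₁ h₂ hL₁ hL₂ α hα α₂ hα₂ hd
    exact partB k hk h₁ h₂ hL₁ hL₂ hα hα₂ hd
  · intro h₁ h₂ hL₁ hL₂ ht₁ ht₂ α hα
    exact partC k hk h₁ h₂ hL₁ hL₂ ht₁ ht₂ hα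
end
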